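/- arXiv:1302.1922 — 8 statements merged into one kernel-verified Lean document; each statement's English description precedes it below -/
import Mathlib

section
/- Let V be a real vector space, x₁,…,x_r ∈ V, a₁,…,a_r > 0, x := a₁x₁ + ⋯ + a_r x_r, and φ₁,…,φ_m linear functionals on V with φ_l(x) > 0 for all l. Then there exist x′₁,…,x′_r in the set of strictly positive rational combinations ℚ_{>0}x₁ + ⋯ + ℚ_{>0}x_r and a′₁,…,a′_r > 0 such that x = a′₁x′₁ + ⋯ + a′_r x′_r and φ_l(x′_i) > 0 for all i and l. -/
/-- Let `V` be a real vector space, `x₁, …, x_r ∈ V`, `a₁, …, a_r > 0`,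
`x = ∑ aᵢ xᵢ`, and `φ₁, …, φ_m` linear functionals with `φ_l(x) > 0` for all `l`. Then there
are `x′₁, …, x′_r ∈ ℚ_{>0} x₁ + ⋯ + ℚ_{>0} x_r` and `a′₁, …, a′_r > 0` with
`x = ∑ a′ᵢ x′ᵢ` and `φ_l(x′ᵢ) > 0` for all `i, l`. -/
theorem stmt1 {V : Type*} [AddCommGroup V] [Module ℝ V]
    {r m : ℕ} (x : Fin r → V) (a : Fin r → ℝ) (ha : ∀ i, 0 < a i)
    (φ : Fin m → (V →ₗ[ℝ] ℝ))
    (hφ : ∀ l, 0 < φ l (∑ i, a i • x i)) :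
    ∃ (x' : Fin r → V) (a' : Fin r → ℝ),
      (∀ i, ∃ c : Fin r → ℚ, (∀ j, 0 < c j) ∧ x' i = ∑ j, (c j : ℝ) • x j) ∧
      (∀ i, 0 < a' i) ∧
      (∑ i, a i • x i) = ∑ i, a' i • x' i ∧
      (∀ i l, 0 < φ l (x' i)) := by
  -- uniform positive lower bound for φ l X
  obtain ⟨ε, hε0, hε⟩ : ∃ ε > (0:ℝ), ∀ l, ε ≤ φ l (∑ i, a i • x i) := by
    rcases isEmpty_or_nonempty (Fin m) with h | h
    · exact ⟨1, one_pos, fun l => (h.false l).elim⟩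
    · refine ⟨Finset.univ.inf' Finset.univ_nonempty (fun l => φ l (∑ i, a i • x i)), ?_,
        fun l => Finset.inf'_le _ (Finset.mem_univ l)⟩
      exact (Finset.lt_inf'_iff _).mpr fun l _ => hφ l
  -- uniform bound for |φ l (x i)|
  obtain ⟨M, hMdef⟩ : ∃ M : ℝ, M = ∑ i : Fin r, ∑ l : Fin m, |φ l (x i)| := ⟨_, rfl⟩
  have hM0 : 0 ≤ M := hMdef ▸
    Finset.sum_nonneg fun i _ => Finset.sum_nonneg fun l _ => abs_nonneg _
  have hM : ∀ i l, |φ l (x i)| ≤ M := by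
    intro i l
    rw [hMdef]
    calc |φ l (x i)| ≤ ∑ l, |φ l (x i)| :=
          Finset.single_le_sum (f := fun l => |φ l (x i)|)
            (fun _ _ => abs_nonneg _) (Finset.mem_univ l)
      _ ≤ ∑ i : Fin r, ∑ l : Fin m, |φ l (x i)| :=
          Finset.single_le_sum (f := fun i => ∑ l : Fin m, |φ l (x i)|)
            (fun i _ => Finset.sum_nonneg fun l _ => abs_nonneg _) (Finset.mem_univ i)
  -- small positive rational t
  obtain ⟨t, ht0, htε⟩ : ∃ t : ℚ, (0:ℝ) < t ∧ (t:ℝ) < ε / (4*(M+1)) :=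
    exists_rat_btwn (show (0:ℝ) < ε / (4*(M+1)) by positivity)
  obtain ⟨δ, hδdef⟩ : ∃ δ : ℝ, δ = min (ε/(4*(r+1)*(M+1))) ((t:ℝ)/(r+1)) := ⟨_, rfl⟩
  have hδ0 : 0 < δ := hδdef ▸ lt_min (by positivity) (by positivity)
  have hδ1 : δ * (4*((r:ℝ)+1)*(M+1)) ≤ ε := by
    have h1 : δ ≤ ε/(4*(r+1)*(M+1)) := hδdef ▸ min_le_left _ _
    rw [← le_div_iff₀ (by positivity)]
    exact h1
  have hδ2 : δ * ((r:ℝ)+1) ≤ (t:ℝ) := by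
    have h1 : δ ≤ (t:ℝ)/(r+1) := hδdef ▸ min_le_right _ _
    rw [← le_div_iff₀ (by positivity)]
    exact h1
  have hr0 : (0:ℝ) ≤ (r:ℝ) := Nat.cast_nonneg r
  -- rational approximations q j of a j from below
  have hq : ∀ j, ∃ q : ℚ, max (a j - δ) 0 < (q:ℝ) ∧ (q:ℝ) < a j := fun j =>
    exists_rat_btwn (max_lt (sub_lt_self _ hδ0) (ha j))
  choose q hq1 hq2 using hq
  have hq0 : ∀ j, (0:ℝ) < q j := fun j => lt_of_le_of_lt (le_max_right _ _) (hq1 j)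
  have hqd : ∀ j, a j - (q j:ℝ) < δ := fun j => by
    have := lt_of_le_of_lt (le_max_left _ _) (hq1 j); linarith
  obtain ⟨Q, hQdef⟩ : ∃ Q : ℝ, Q = ∑ j, (q j : ℝ) := ⟨_, rfl⟩
  obtain ⟨A, hAdef⟩ : ∃ A : ℝ, A = ∑ j, a j := ⟨_, rfl⟩
  have hQ0 : 0 ≤ Q := hQdef ▸ Finset.sum_nonneg fun j _ => (hq0 j).le
  have hA0 : 0 ≤ A := hAdef ▸ Finset.sum_nonneg fun j _ => (ha j).le
  have hAQ : A - Q ≤ (r:ℝ) * δ := by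
    have h1 : A - Q = ∑ j, (a j - (q j:ℝ)) := by
      rw [hAdef, hQdef, Finset.sum_sub_distrib]
    rw [h1]
    calc ∑ j, (a j - (q j:ℝ)) ≤ ∑ _j : Fin r, δ :=
          Finset.sum_le_sum fun j _ => (hqd j).le
      _ = (r:ℝ) * δ := by simp [Finset.sum_const, mul_comm]
  have hrt : (r:ℝ) * δ < (t:ℝ) := by nlinarith
  have hAQt : A < Q + (t:ℝ) := by linarith
  have hQt : (0:ℝ) < Q + (t:ℝ) := by linarith
  obtain ⟨xq, hxqdef⟩ : ∃ v : V, v = ∑ j, (q j : ℝ) • x j := ⟨_, rfl⟩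
  -- bound φ l X - φ l xq
  have hkey : ∀ l, φ l (∑ i, a i • x i) - φ l xq ≤ (r:ℝ) * δ * M := by
    intro l
    have heq : φ l (∑ i, a i • x i) - φ l xq = ∑ j, (a j - (q j:ℝ)) * φ l (x j) := by
      rw [hxqdef, map_sum, map_sum, ← Finset.sum_sub_distrib]
      refine Finset.sum_congr rfl fun j _ => ?_
      simp [map_smul, smul_eq_mul, sub_mul]
    rw [heq]
    calc ∑ j, (a j - (q j:ℝ)) * φ l (x j) ≤ ∑ _j : Fin r, δ * M := by
          refine Finset.sum_le_sum fun j _ => ?_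
          have h1 := hM j l
          have h2 := hqd j
          have h3 := hq2 j
          nlinarith [le_abs_self (φ l (x j)), abs_nonneg (φ l (x j))]
      _ = (r:ℝ) * (δ * M) := by simp [Finset.sum_const, mul_comm]
      _ = (r:ℝ) * δ * M := by ring
  have hδM : (r:ℝ) * δ * M < ε/4 := by
    nlinarith [mul_nonneg hr0 hδ0.le, mul_nonneg hδ0.le hM0,
      mul_nonneg (mul_nonneg hr0 hδ0.le) hM0]
  have htM : (t:ℝ) * M < ε/4 := by
    have h4 : (t:ℝ) * (4*(M+1)) < ε := by
      rw [← lt_div_iff₀ (by positivity)]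
      exact htε
    nlinarith
  -- the construction
  obtain ⟨S, hSdef⟩ : ∃ S : ℝ, S = A / (Q + (t:ℝ)) := ⟨_, rfl⟩
  have hS0 : 0 ≤ S := hSdef ▸ div_nonneg hA0 hQt.le
  have hS1 : S < 1 := hSdef ▸ (div_lt_one hQt).mpr hAQt
  have hSQ : S * (Q + (t:ℝ)) = A := by rw [hSdef]; field_simp
  obtain ⟨a', ha'def⟩ : ∃ a' : Fin r → ℝ, a' = fun j => (a j - (q j:ℝ) * S) / (t:ℝ) :=
    ⟨_, rfl⟩
  obtain ⟨x', hx'def⟩ : ∃ x' : Fin r → V, x' = fun i => xq + (t:ℝ) • x i := ⟨_, rfl⟩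
  have ha' : ∀ j, 0 < a' j := by
    intro j
    have h1 : (q j:ℝ) * S < a j := by
      calc (q j:ℝ) * S ≤ (q j:ℝ) * 1 := mul_le_mul_of_nonneg_left hS1.le (hq0 j).le
        _ = (q j:ℝ) := mul_one _
        _ < a j := hq2 j
    rw [ha'def]
    exact div_pos (by linarith) ht0
  have hid : ∀ j, S * (q j:ℝ) + a' j * (t:ℝ) = a j := by
    intro j
    rw [ha'def]
    field_simp
    ring
  have hsum_a' : ∑ j, a' j = S := by
    have h1 : ∑ j, a' j = (A - Q * S) / (t:ℝ) := by
      rw [ha'def, hAdef, hQdef, ← Finset.sum_div, Finset.sum_sub_distrib, Finset.sum_mul]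
    rw [h1, div_eq_iff (ne_of_gt ht0)]
    nlinarith
  refine ⟨x', a', ?_, ha', ?_, ?_⟩
  · intro i
    refine ⟨fun j => q j + if i = j then t else 0, ?_, ?_⟩
    · intro j
      have htq : (0:ℚ) < t := by exact_mod_cast ht0
      have hqq : (0:ℚ) < q j := by exact_mod_cast hq0 j
      by_cases h : i = j <;> simp [h] <;> linarith
    · rw [hx'def]
      have hcast : ∀ j, ((q j + if i = j then t else 0 : ℚ) : ℝ)
          = (q j : ℝ) + if i = j then (t:ℝ) else 0 := by
        intro j; by_cases h : i = j <;> simp [h]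
      calc xq + (t:ℝ) • x i
          = (∑ j, (q j : ℝ) • x j) + ∑ j, (if i = j then (t:ℝ) else 0) • x j := by
            rw [hxqdef]
            congr 1
            simp [ite_smul]
        _ = ∑ j, ((q j : ℝ) + if i = j then (t:ℝ) else 0) • x j := by
            rw [← Finset.sum_add_distrib]
            exact Finset.sum_congr rfl fun j _ => (add_smul _ _ _).symm
        _ = ∑ j, ((q j + if i = j then t else 0 : ℚ) : ℝ) • x j :=
            Finset.sum_congr rfl fun j _ => by rw [hcast j]
  · -- the sum identity
    calc ∑ i, a i • x i = ∑ j, (S * (q j:ℝ) + a' j * (t:ℝ)) • x j :=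
          Finset.sum_congr rfl fun j _ => by rw [hid j]
      _ = ∑ j, (S * (q j:ℝ)) • x j + ∑ j, (a' j * (t:ℝ)) • x j := by
          rw [← Finset.sum_add_distrib]
          exact Finset.sum_congr rfl fun j _ => add_smul _ _ _
      _ = S • xq + ∑ j, (a' j * (t:ℝ)) • x j := by
          rw [hxqdef, Finset.smul_sum]
          congr 1
          exact Finset.sum_congr rfl fun j _ => (smul_smul _ _ _).symm
      _ = (∑ i, a' i) • xq + ∑ i, (a' i * (t:ℝ)) • x i := by rw [hsum_a']
      _ = ∑ i, (a' i • xq + (a' i * (t:ℝ)) • x i) := by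
          rw [Finset.sum_add_distrib, Finset.sum_smul]
      _ = ∑ i, a' i • x' i := by
          refine Finset.sum_congr rfl fun i _ => ?_
          rw [hx'def, smul_add, smul_smul]
  · intro i l
    have h1 : φ l (x' i) = φ l xq + (t:ℝ) * φ l (x i) := by
      rw [hx'def, map_add, map_smul, smul_eq_mul]
    have h2 := hkey l
    have h3 := hε l
    have h4 : -M ≤ φ l (x i) := neg_le_of_abs_le (hM i l)
    have h5 : (t:ℝ) * -M ≤ (t:ℝ) * φ l (x i) := mul_le_mul_of_nonneg_left h4 ht0.le
    rw [mul_neg] at h5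
    rw [h1]
    linarith
end

section
/- Let A be a noetherian integral domain with quotient field F, and f ∈ F^×. Set I = {a ∈ A : af ∈ A} and J = I·f. Then I and J are ideals of A, and for a prime ideal p of A, f is a unit in A_p if and only if I_p = A_p and J_p = A_p. Consequently the set V(f) = {p ∈ Spec A : f ∉ A_p^×} equals Supp(A/I) ∪ Supp(A/J) and is closed in Spec A. -/
/-- Let `A` be a noetherian integral domain with quotient field `F` and
`f ∈ F^×`. Set `I = {a ∈ A : a·f ∈ A}` and `J = I·f`. Then `I` and `J` are ideals of `A`;
for a prime `p`, `f` is a unit in `A_p` (i.e. `f = a/b` with `a, b ∉ p`) iff `I_p = A_p`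
and `J_p = A_p` (i.e. `I ⊄ p` and `J ⊄ p`); and the set
`V(f) = {p ∈ Spec A : f ∉ A_p^×}` equals `Supp(A/I) ∪ Supp(A/J)` (the zero loci of `I` and
`J`) and is closed in `Spec A`. -/
theorem stmt3 {A : Type*} [CommRing A] [IsDomain A] [IsNoetherianRing A]
    (F : Type*) [Field F] [Algebra A F] [IsFractionRing A F]
    (f : F) (hf : f ≠ 0) :
    ∃ I J : Ideal A,
      (∀ a : A, a ∈ I ↔ f * algebraMap A F a ∈ (algebraMap A F).range) ∧
      (∀ b : A, b ∈ J ↔ ∃ a ∈ I, algebraMap A F b = f * algebraMap A F a) ∧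
      (∀ p : Ideal A, p.IsPrime →
        ((∃ a b : A, a ∉ p ∧ b ∉ p ∧ f * algebraMap A F b = algebraMap A F a) ↔
          (¬ I ≤ p ∧ ¬ J ≤ p))) ∧
      {p : PrimeSpectrum A | ¬ ∃ a b : A, a ∉ p.asIdeal ∧ b ∉ p.asIdeal ∧
          f * algebraMap A F b = algebraMap A F a}
        = PrimeSpectrum.zeroLocus (I : Set A) ∪ PrimeSpectrum.zeroLocus (J : Set A) ∧
      IsClosed {p : PrimeSpectrum A | ¬ ∃ a b : A, a ∉ p.asIdeal ∧ b ∉ p.asIdeal ∧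
          f * algebraMap A F b = algebraMap A F a} := by
  have inj := IsFractionRing.injective A F
  set φ := algebraMap A F with hφ
  let I : Ideal A :=
    { carrier := {a | f * φ a ∈ φ.range}
      add_mem' := by
        rintro a b ⟨x, hx⟩ ⟨y, hy⟩
        exact ⟨x + y, by simp only [map_add, hx, hy, mul_add]⟩
      zero_mem' := ⟨0, by simp⟩
      smul_mem' := by
        rintro c a ⟨x, hx⟩
        exact ⟨c * x, by simp only [smul_eq_mul, map_mul, hx]; ring⟩ }
  have hI : ∀ a : A, a ∈ I ↔ f * φ a ∈ φ.range := fun a => Iff.rfl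
  let J : Ideal A :=
    { carrier := {b | ∃ a ∈ I, φ b = f * φ a}
      add_mem' := by
        rintro b₁ b₂ ⟨a₁, ha₁, e₁⟩ ⟨a₂, ha₂, e₂⟩
        exact ⟨a₁ + a₂, add_mem ha₁ ha₂, by simp only [map_add, e₁, e₂]; ring⟩
      zero_mem' := ⟨0, zero_mem I, by simp⟩
      smul_mem' := by
        rintro c b ⟨a, ha, e⟩
        refine ⟨c * a, I.mul_mem_left c ha, ?_⟩
        simp only [smul_eq_mul, map_mul, e]; ring }
  have hJ : ∀ b : A, b ∈ J ↔ ∃ a ∈ I, φ b = f * φ a := fun b => Iff.rfl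
  have key : ∀ p : Ideal A, p.IsPrime →
      ((∃ a b : A, a ∉ p ∧ b ∉ p ∧ f * φ b = φ a) ↔ (¬ I ≤ p ∧ ¬ J ≤ p)) := by
    intro p hp
    constructor
    · rintro ⟨a, b, hap, hbp, he⟩
      refine ⟨fun h => hbp (h ⟨a, he.symm⟩), fun h => hap (h ⟨b, ⟨a, he.symm⟩, he.symm⟩)⟩
    · rintro ⟨hIp, hJp⟩
      rw [SetLike.not_le_iff_exists] at hIp hJp
      obtain ⟨b, hbI, hbp⟩ := hIp
      obtain ⟨a', ha'J, ha'p⟩ := hJp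
      obtain ⟨a, ha⟩ := hbI
      obtain ⟨c, hcI, hc⟩ := ha'J
      -- a*c = b*a'
      have hac : a * c = b * a' := by
        apply inj
        have : φ a * φ c * f = φ b * φ a' * f := by
          rw [ha, hc]; ring
        have := mul_right_cancel₀ hf this
        simpa [map_mul] using this
      have hap : a ∉ p := by
        intro hapmem
        have : a * c ∈ p := p.mul_mem_right c hapmem
        rw [hac] at this
        rcases hp.mem_or_mem this with h | h
        · exact hbp h
        · exact ha'p h
      exact ⟨a, b, hap, hbp, ha.symm⟩
  refine ⟨I, J, hI, hJ, key, ?_, ?_⟩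
  · ext p
    simp only [Set.mem_setOf_eq, Set.mem_union, PrimeSpectrum.mem_zeroLocus,
      SetLike.coe_subset_coe]
    rw [← not_iff_not]
    push_neg
    rw [key p.asIdeal p.isPrime]
  · have : {p : PrimeSpectrum A | ¬ ∃ a b : A, a ∉ p.asIdeal ∧ b ∉ p.asIdeal ∧
        f * φ b = φ a} = PrimeSpectrum.zeroLocus (I : Set A) ∪
        PrimeSpectrum.zeroLocus (J : Set A) := by
      ext p
      simp only [Set.mem_setOf_eq, Set.mem_union, PrimeSpectrum.mem_zeroLocus,
        SetLike.coe_subset_coe]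
      rw [← not_iff_not]
      push_neg
      rw [key p.asIdeal p.isPrime]
    rw [this]
    exact (PrimeSpectrum.isClosed_zeroLocus _).union (PrimeSpectrum.isClosed_zeroLocus _)
end

section
/- Hartogs' lemma for ℝ-rational functions: let A be a normal noetherian domain with quotient field F, and let x ∈ F^× ⊗_ℤ ℝ. If ord_Γ(x) ≥ 0 for all prime divisors Γ of A (height-one primes), then there exist x₁,…,x_r ∈ A \ {0} and a₁,…,a_r ∈ ℝ_{>0} with x = x₁^{a₁} ⋯ x_r^{a_r} in F^× ⊗_ℤ ℝ. -/
/-!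
First, Hartogs' lemma for `A` itself: an element `u ∈ F` lying in `A_p` for every height-one
prime `p` lies in `A`. Otherwise the class of `u` in `F ⧸ A` has an associated prime
`p = (A : z)` with `z ∉ A`. It is nonzero, and it has height one because for a nonzero prime
`q ⊊ p` and `t ∈ p \ q`, every `e ∈ q` satisfies `(z e) t = e (z t) ∈ q`, so `z q ⊆ q` and `z`
is integral over `A`, i.e. `z ∈ A`. Since `u ∈ A_p`, some `b ∉ p` has `b u ∈ A`, yet
`b ∈ ann(u) ⊆ p`.

For `x = ∑ cᵢ ⊗ yᵢ`, only the finitely many height-one primes at which some `yᵢ` has nonzero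
order matter, so `c` lies in the rational polyhedral cone cut out by `∑ cᵢ ord_p(yᵢ) ≥ 0`.
Expand the coordinates of `c` in a `ℚ`-basis of the `ℚ`-span they generate. A constraint that is
tight at `c` then vanishes identically, and the remaining ones are strict, so they also hold
near `c`. Hence `c` is a positive combination of rational points `w` of the cone. Clearing
denominators turns each `w` into `(1/N) ⊗ x` with `ord_p x ≥ 0` for all `p`, i.e. `x ∈ A`.
-/

open TensorProduct Matrix

theorem add_sum_smul_mem_convexHull {E ι : Type*} [AddCommGroup E] [Module ℝ E] [Fintype ι]
    {s : Set E} {μ : E} {e : ι → E} {t : ι → ℝ} {δ : ℝ} (hδ : 0 < δ) (ht : ∀ i, 0 ≤ t i)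
    (htδ : ∑ i, t i ≤ δ) (hμ : μ ∈ s) (he : ∀ i, μ + δ • e i ∈ s) :
    μ + ∑ i, t i • e i ∈ convexHull ℝ s := by
  let w : Option ι → ℝ := fun o => o.elim (1 - (∑ i, t i) / δ) (fun i => t i / δ)
  let v : Option ι → E := fun o => o.elim μ (fun i => μ + δ • e i)
  have hw : ∀ o ∈ Finset.univ, 0 ≤ w o := by
    rintro (_ | i) -
    · simpa [w, sub_nonneg] using (div_le_one hδ).mpr htδ
    · exact div_nonneg (ht i) hδ.le
  have hv : ∀ o ∈ Finset.univ, v o ∈ convexHull ℝ s := by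
    rintro (_ | i) - <;> exact subset_convexHull ℝ s (by simp [v, hμ, he])
  convert (convex_convexHull ℝ s).sum_mem hw (by simp [w, Fintype.sum_option, ← Finset.sum_div])
    hv using 1
  simp only [Fintype.sum_option, w, v, Option.elim, smul_add, Finset.sum_add_distrib, smul_smul,
    div_mul_cancel₀ _ hδ.ne', ← Finset.sum_smul, sub_smul, one_smul, ← Finset.sum_div]
  abel

theorem mem_convexHull_ratCast_of_isOpen {ι : Type*} [Fintype ι] {U : Set (ι → ℝ)}
    (hU : IsOpen U) {u : ι → ℝ} (hu : u ∈ U) :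
    u ∈ convexHull ℝ (U ∩ Set.range fun w : ι → ℚ => ((↑) ∘ w : ι → ℝ)) := by
  classical
  set R := U ∩ Set.range fun w : ι → ℚ => ((↑) ∘ w : ι → ℝ)
  obtain ⟨ε, hε, hball⟩ := Metric.isOpen_iff.mp hU u hu
  obtain ⟨δ, hδ, hδε⟩ := exists_rat_btwn hε
  have hδq : 0 ≤ δ := by exact_mod_cast hδ.le
  set η : ℝ := δ / (Fintype.card ι + 1)
  have hηδ : η ≤ δ := div_le_self hδ.le (by linarith)
  choose μ hμu hμ using fun i => exists_rat_btwn (sub_lt_self (u i) (by positivity : 0 < η))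
  -- `u` lies in the rational simplex with vertices `μ` and `μ + δ • eᵢ`, all within `ε` of `u`.
  have htδ : ∑ i, (u i - μ i) ≤ δ := by
    calc ∑ i, (u i - μ i) ≤ ∑ _i : ι, η := Finset.sum_le_sum fun i _ => by linarith [hμu i]
      _ ≤ δ := by
          rw [Finset.sum_const, Finset.card_univ, nsmul_eq_mul, mul_div_assoc']
          exact (div_le_iff₀ (by positivity)).mpr (by nlinarith)
  have hvert : ∀ a : ι → ℚ, (∀ j, 0 ≤ a j ∧ a j ≤ δ) → ((↑) ∘ (μ + a) : ι → ℝ) ∈ R := by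
    refine fun a ha => ⟨hball ((dist_pi_lt_iff hε).mpr fun j => ?_), _, rfl⟩
    have ha' : (0 : ℝ) ≤ a j ∧ (a j : ℝ) ≤ δ := by exact_mod_cast ha j
    rw [Real.dist_eq, Function.comp_apply, Pi.add_apply, Rat.cast_add, abs_sub_lt_iff]
    constructor <;> linarith [hμ j, hμu j]
  have hμR : ((↑) ∘ μ : ι → ℝ) ∈ R := by simpa using hvert 0 fun _ => ⟨le_rfl, hδq⟩
  have hμiR : ∀ i, ((↑) ∘ μ : ι → ℝ) + (δ : ℝ) • Pi.single i 1 ∈ R := by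
    intro i
    have hsingle : ∀ j, 0 ≤ (Pi.single i δ : ι → ℚ) j ∧ (Pi.single i δ : ι → ℚ) j ≤ δ :=
      fun j => by rcases eq_or_ne j i with rfl | hji <;> simp [*]
    convert hvert (Pi.single i δ) hsingle using 1
    ext j
    rcases eq_or_ne j i with rfl | hji <;> simp [*]
  convert add_sum_smul_mem_convexHull hδ (fun i => sub_nonneg.mpr (hμ i).le) htδ hμR hμiR
    using 1
  ext j
  simp [Finset.sum_apply, Pi.single_apply]

theorem exists_fin_pos_sum_smul_of_mem_convexHull {E : Type*} [AddCommGroup E] [Module ℝ E]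
    {s : Set E} {x : E} (hx : x ∈ convexHull ℝ s) :
    ∃ (r : ℕ) (z : Fin r → E) (a : Fin r → ℝ),
      (∀ m, z m ∈ s) ∧ (∀ m, 0 < a m) ∧ x = ∑ m, a m • z m := by
  obtain ⟨ι, _, z, a, hz, -, ha, -, rfl⟩ := eq_pos_convex_span_of_mem_convexHull hx
  let e := Fintype.equivFin ι
  exact ⟨_, z ∘ e.symm, a ∘ e.symm, fun m => hz ⟨_, rfl⟩, fun m => ha _,
    (e.symm.sum_comp fun i => a i • z i).symm⟩

theorem ratCast_comp_dotProduct {n : Type*} [Fintype n] (v w : n → ℚ) :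
    ((↑) ∘ v : n → ℝ) ⬝ᵥ ((↑) ∘ w) = ((v ⬝ᵥ w : ℚ) : ℝ) := by
  simp [dotProduct]

theorem ratCast_comp_mulVec {m n : Type*} [Fintype n] (q : Matrix m n ℚ) (w : n → ℚ) :
    q.map (↑) *ᵥ ((↑) ∘ w) = ((↑) ∘ (q *ᵥ w) : m → ℝ) :=
  funext fun i => ((Rat.castHom ℝ).map_mulVec q w i).symm

theorem ratCast_comp_vecMul {m n : Type*} [Fintype m] (v : m → ℚ) (q : Matrix m n ℚ) :
    ((↑) ∘ v : m → ℝ) ᵥ* q.map (↑) = (↑) ∘ (v ᵥ* q) :=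
  funext fun i => ((Rat.castHom ℝ).map_vecMul q v i).symm

theorem exists_linearIndependent_rat_mulVec {ι : Type*} [Fintype ι] (c : ι → ℝ) :
    ∃ (k : ℕ) (u : Fin k → ℝ) (q : Matrix ι (Fin k) ℚ),
      LinearIndependent ℚ u ∧ c = q.map (↑) *ᵥ u := by
  let V := Submodule.span ℚ (Set.range c)
  have hcV : ∀ i, c i ∈ V := fun i => Submodule.subset_span ⟨i, rfl⟩
  have : FiniteDimensional ℚ V := FiniteDimensional.span_of_finite ℚ (Set.finite_range c)
  let B := Module.finBasis ℚ V
  refine ⟨_, fun j => B j, Matrix.of fun i j => B.repr ⟨c i, hcV i⟩ j,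
    B.linearIndependent.map' V.subtype V.ker_subtype, funext fun i => ?_⟩
  have := congrArg Subtype.val (B.sum_repr ⟨c i, hcV i⟩)
  simp only [Submodule.coe_sum, Submodule.coe_smul, Rat.smul_def] at this
  simpa [Matrix.mulVec, dotProduct] using this.symm

theorem mem_convexHull_ratCast_of_linearIndependent {ι κ : Type*} [Fintype ι] [Finite κ]
    {u : ι → ℝ} (hu : LinearIndependent ℚ u) (β : κ → ι → ℚ)
    (hβ : ∀ p, 0 ≤ ((↑) ∘ β p : ι → ℝ) ⬝ᵥ u) :
    u ∈ convexHull ℝ ((fun w : ι → ℚ => ((↑) ∘ w : ι → ℝ)) '' {w | ∀ p, 0 ≤ β p ⬝ᵥ w}) := by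
  let U := {v : ι → ℝ | ∀ p, 0 < ((↑) ∘ β p : ι → ℝ) ⬝ᵥ u → 0 < ((↑) ∘ β p : ι → ℝ) ⬝ᵥ v}
  have hU : IsOpen U := by
    simp only [U, Set.ofPred_forall]
    refine isOpen_iInter_of_finite fun p => ?_
    by_cases hp : 0 < ((↑) ∘ β p : ι → ℝ) ⬝ᵥ u
    · simpa [hp] using isOpen_lt continuous_const (by fun_prop)
    · simp [hp]
  refine convexHull_mono ?_ (mem_convexHull_ratCast_of_isOpen hU fun _ => id)
  rintro _ ⟨hwU, w, rfl⟩
  refine ⟨w, fun p => ?_, rfl⟩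
  rcases (hβ p).lt_or_eq with hp | hp
  · exact_mod_cast ratCast_comp_dotProduct (β p) w ▸ (hwU p hp).le
  · have : β p = 0 := funext <| Fintype.linearIndependent_iff.mp hu (β p) (by
      simpa [dotProduct, Rat.smul_def] using hp.symm)
    simp [this]

theorem mem_convexHull_ratCast_of_forall_nonneg {ι κ : Type*} [Fintype ι] [Finite κ]
    (M : κ → ι → ℚ) {c : ι → ℝ} (hc : ∀ p, 0 ≤ c ⬝ᵥ ((↑) ∘ M p : ι → ℝ)) :
    c ∈ convexHull ℝ ((fun w : ι → ℚ => ((↑) ∘ w : ι → ℝ)) '' {w | ∀ p, 0 ≤ w ⬝ᵥ M p}) := by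
  obtain ⟨k, u, q, hu, rfl⟩ := exists_linearIndependent_rat_mulVec c
  have hmem := mem_convexHull_ratCast_of_linearIndependent hu (fun p => M p ᵥ* q) fun p => by
    have := hc p
    rwa [dotProduct_comm, dotProduct_mulVec, ratCast_comp_vecMul] at this
  have := (q.map ((↑) : ℚ → ℝ)).mulVecLin.image_convexHull _ ▸ Set.mem_image_of_mem _ hmem
  refine convexHull_mono ?_ this
  rintro _ ⟨_, ⟨w, hw, rfl⟩, rfl⟩
  refine ⟨q *ᵥ w, fun p => ?_, (ratCast_comp_mulVec q w).symm⟩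
  rw [dotProduct_comm, dotProduct_mulVec]
  exact hw p

theorem exists_nat_mul_eq_intCast {ι : Type*} [Fintype ι] (w : ι → ℚ) :
    ∃ N : ℕ, 0 < N ∧ ∃ n : ι → ℤ, ∀ i, (n i : ℚ) = N * w i := by
  classical
  refine ⟨∏ i, (w i).den, Finset.prod_pos fun i _ => (w i).pos, ?_⟩
  choose R hR using fun i => Finset.dvd_prod_of_mem (fun j => (w j).den) (Finset.mem_univ i)
  refine ⟨fun i => R i * (w i).num, fun i => ?_⟩
  simp only [hR i, Int.cast_mul, Int.cast_natCast, Nat.cast_mul, ← Rat.mul_den_eq_num]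
  ring

theorem sum_mul_ratCast_tmul_eq {G ι : Type*} [AddCommGroup G] [Fintype ι] (r : ℝ)
    (w : ι → ℚ) (g : ι → G) {N : ℕ} (hN : N ≠ 0) {n : ι → ℤ}
    (hn : ∀ i, (n i : ℚ) = N * w i) :
    ∑ i, (r * w i) ⊗ₜ[ℤ] g i = (r / N) ⊗ₜ[ℤ] ∑ i, n i • g i := by
  rw [tmul_sum]
  refine Finset.sum_congr rfl fun i _ => ?_
  rw [← smul_tmul, zsmul_eq_mul, show (n i : ℝ) = N * w i by exact_mod_cast hn i]
  field_simp

theorem Submodule.colon_bot_mk {R M : Type*} [CommRing R] [AddCommGroup M] [Module R M]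
    (N : Submodule R M) (x : M) :
    (⊥ : Submodule R (M ⧸ N)).colon {Submodule.Quotient.mk x} = N.colon {x} := by
  ext r
  simp only [Submodule.mem_colon_singleton, Submodule.mem_bot, ← Submodule.Quotient.mk_smul,
    Submodule.Quotient.mk_eq_zero]

def IsHeightOnePrime {A : Type*} [CommRing A] (p : Ideal A) : Prop :=
  p.IsPrime ∧ p ≠ ⊥ ∧ ∀ q : Ideal A, q.IsPrime → q < p → q = ⊥

theorem finite_setOf_isHeightOnePrime_mem {A : Type*} [CommRing A] [IsNoetherianRing A] {a : A}
    (ha : a ≠ 0) : {p : Ideal A | IsHeightOnePrime p ∧ a ∈ p}.Finite := by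
  refine (Ideal.span {a}).finite_minimalPrimes_of_isNoetherianRing.subset ?_
  rintro p ⟨⟨hp, -, hmin⟩, hap⟩
  refine ⟨⟨hp, (Ideal.span_singleton_le_iff_mem _).mpr hap⟩, fun q ⟨hq, haq⟩ hqp => ?_⟩
  refine (hqp.lt_or_eq.resolve_left fun hlt => ha ?_).ge
  simpa [hmin q hq hlt] using haq ((Ideal.span_singleton_le_iff_mem _).mp le_rfl)

section Hartogs

variable {A : Type*} [CommRing A] [IsDomain A] [IsNoetherianRing A] [IsIntegrallyClosed A]
  {F : Type*} [Field F] [Algebra A F] [IsFractionRing A F]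

theorem isHeightOnePrime_colon_one {z : F} (hp : ((1 : Submodule A F).colon {z}).IsPrime) :
    IsHeightOnePrime ((1 : Submodule A F).colon {z}) := by
  set p := (1 : Submodule A F).colon {z}
  have hz : z ∉ (1 : Submodule A F) := fun hz => hp.ne_top <| Ideal.eq_top_of_isUnit_mem _
    (Submodule.mem_colon_singleton.mpr (by simpa using hz)) isUnit_one
  have mem_p : ∀ {e : A}, e ∈ p → ∃ e' : A, z * algebraMap A F e = algebraMap A F e' := by
    intro e he
    obtain ⟨e', he'⟩ := Submodule.mem_one.mp (Submodule.mem_colon_singleton.mp he)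
    exact ⟨e', by rw [he', Algebra.smul_def, mul_comm]⟩
  refine ⟨hp, ?_, fun q hq hqp => by_contra fun hq0 => hz ?_⟩
  · obtain ⟨⟨a, b⟩, hab⟩ := IsLocalization.surj (nonZeroDivisors A) z
    refine (Submodule.ne_bot_iff _).mpr ⟨b, Submodule.mem_colon_singleton.mpr ?_,
      nonZeroDivisors.ne_zero b.2⟩
    exact Submodule.mem_one.mpr ⟨a, by rw [Algebra.smul_def, mul_comm]; exact hab.symm⟩
  · set N := Submodule.map (Algebra.linearMap A F) q
    obtain ⟨t, htp, htq⟩ := SetLike.exists_of_lt hqp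
    obtain ⟨d, hd⟩ := mem_p htp
    have hN : ∀ n ∈ N, z • n ∈ N := by
      rintro _ ⟨e, heq, rfl⟩
      obtain ⟨e', he'⟩ := mem_p (hqp.le heq)
      have het : e' * t = e * d := IsFractionRing.injective A F <| by
        simp only [map_mul, ← he', ← hd]; ring
      have he'q : e' ∈ q :=
        (hq.mem_or_mem (het ▸ q.mul_mem_right d heq)).resolve_right htq
      exact ⟨e', he'q, by simp [he']⟩
    have hNbot : N ≠ ⊥ := by
      obtain ⟨e, heq, he0⟩ := (Submodule.ne_bot_iff _).mp hq0
      exact (Submodule.ne_bot_iff _).mpr ⟨_, ⟨e, heq, rfl⟩, by simpa using he0⟩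
    have hint := isIntegral_of_smul_mem_submodule N hNbot
      ((IsNoetherian.noetherian q).map _) z hN
    exact Submodule.mem_one.mpr (IsIntegrallyClosed.algebraMap_eq_of_integral hint)

theorem mem_range_algebraMap_of_forall_isHeightOnePrime {u : F}
    (hu : ∀ p : Ideal A, IsHeightOnePrime p →
      ∃ a b : A, b ∉ p ∧ u * algebraMap A F b = algebraMap A F a) :
    u ∈ (algebraMap A F).range := by
  by_contra h
  have hu0 : (Submodule.Quotient.mk u : F ⧸ (1 : Submodule A F)) ≠ 0 := by
    rwa [Ne, Submodule.Quotient.mk_eq_zero, Submodule.mem_one]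
  obtain ⟨P, hP, hle⟩ := exists_le_isAssociatedPrime_of_isNoetherianRing A _ hu0
  obtain ⟨hPprime, x, rfl⟩ := (isAssociatedPrime_iff).mp hP
  obtain ⟨z, rfl⟩ := Submodule.Quotient.mk_surjective _ x
  simp only [Submodule.colon_bot_mk] at hPprime hle
  obtain ⟨a, b, hb, hab⟩ := hu _ (isHeightOnePrime_colon_one hPprime)
  refine hb (hle ?_)
  rw [Submodule.mem_colon_singleton, Submodule.mem_one]
  exact ⟨a, by rw [Algebra.smul_def, mul_comm, hab]⟩

end Hartogs

section Ord

variable {A : Type*} [CommRing A] [IsDomain A] [IsNoetherianRing A]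
  {F : Type*} [Field F] [Algebra A F] [IsFractionRing A F] {ord : Ideal A → Additive Fˣ →+ ℤ}

theorem finite_setOf_ord_ne_zero
    (hord : ∀ p : Ideal A, IsHeightOnePrime p → ∀ u : Fˣ, (0 ≤ ord p (Additive.ofMul u) ↔
      ∃ a b : A, b ∉ p ∧ (u : F) * algebraMap A F b = algebraMap A F a)) (u : Fˣ) :
    {p | IsHeightOnePrime p ∧ ord p (Additive.ofMul u) ≠ 0}.Finite := by
  obtain ⟨⟨a, b⟩, hab⟩ := IsLocalization.surj (nonZeroDivisors A) (u : F)
  have hb : (b : A) ≠ 0 := nonZeroDivisors.ne_zero b.2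
  have ha : a ≠ 0 := by
    rintro rfl
    simp [hb] at hab
  refine (finite_setOf_isHeightOnePrime_mem (mul_ne_zero ha hb)).subset ?_
  rintro p ⟨hp, hne⟩
  refine ⟨hp, by_contra fun habp => hne (le_antisymm ?_ ?_)⟩
  · have := (hord p hp u⁻¹).mpr ⟨b, a, fun h => habp (p.mul_mem_right _ h), by
      simp [← hab]⟩
    rwa [ofMul_inv, map_neg, neg_nonneg] at this
  · exact (hord p hp u).mpr ⟨a, b, fun h => habp (p.mul_mem_left _ h), hab⟩

theorem exists_mem_range_tmul_eq_of_ord_nonneg [IsIntegrallyClosed A]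
    (hord : ∀ p : Ideal A, IsHeightOnePrime p → ∀ u : Fˣ, (0 ≤ ord p (Additive.ofMul u) ↔
      ∃ a b : A, b ∉ p ∧ (u : F) * algebraMap A F b = algebraMap A F a))
    {ι : Type*} [Fintype ι] (y : ι → Fˣ) (w : ι → ℚ)
    (hw : ∀ p, IsHeightOnePrime p → 0 ≤ ∑ i, w i * ord p (Additive.ofMul (y i))) :
    ∃ (N : ℕ) (x : Fˣ), 0 < N ∧ (x : F) ∈ (algebraMap A F).range ∧
      ∀ r : ℝ, ∑ i, (r * w i) ⊗ₜ[ℤ] Additive.ofMul (y i) = (r / N) ⊗ₜ[ℤ] Additive.ofMul x := by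
  obtain ⟨N, hN, n, hn⟩ := exists_nat_mul_eq_intCast w
  refine ⟨N, Additive.toMul (∑ i, n i • Additive.ofMul (y i)), hN,
    mem_range_algebraMap_of_forall_isHeightOnePrime fun p hp => (hord p hp _).mp ?_,
    fun r => sum_mul_ratCast_tmul_eq r w _ hN.ne' hn⟩
  have : ((ord p (∑ i, n i • Additive.ofMul (y i)) : ℤ) : ℚ) =
      N * ∑ i, w i * ord p (Additive.ofMul (y i)) := by
    simp [Finset.mul_sum, hn, mul_assoc]
  exact_mod_cast this ▸ mul_nonneg (Nat.cast_nonneg N) (hw p hp)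

end Ord

/-- Hartogs' lemma for ℝ-rational functions. Let `A` be a normal
(integrally closed) noetherian domain with quotient field `F`.  For each height-one prime
`p` let `ord p : F^× → ℤ` be the associated discrete valuation (characterized by
`ord p u ≥ 0 ↔ u ∈ A_p`).  Let `x = y₁^{c₁} ⋯ y_s^{c_s} ∈ F^× ⊗_ℤ ℝ`.  If
`ord_p(x) ≥ 0` for all height-one primes `p`, then there are `x₁, …, x_r ∈ A \ {0}` and
`a₁, …, a_r > 0` with `x = x₁^{a₁} ⋯ x_r^{a_r}` in `F^× ⊗_ℤ ℝ`. -/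
theorem stmt6 {A : Type*} [CommRing A] [IsDomain A] [IsNoetherianRing A]
    [IsIntegrallyClosed A]
    (F : Type*) [Field F] [Algebra A F] [IsFractionRing A F]
    (ord : Ideal A → (Additive Fˣ →+ ℤ))
    (hord : ∀ p : Ideal A, p.IsPrime → p ≠ ⊥ →
      (∀ q : Ideal A, q.IsPrime → q < p → q = ⊥) →
      ∀ u : Fˣ, (0 ≤ ord p (Additive.ofMul u) ↔
        ∃ a b : A, b ∉ p ∧ (u : F) * algebraMap A F b = algebraMap A F a))
    (s : ℕ) (y : Fin s → Fˣ) (c : Fin s → ℝ)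
    (hpos : ∀ p : Ideal A, p.IsPrime → p ≠ ⊥ →
      (∀ q : Ideal A, q.IsPrime → q < p → q = ⊥) →
      0 ≤ ∑ i, c i * (ord p (Additive.ofMul (y i)) : ℝ)) :
    ∃ (r : ℕ) (x : Fin r → Fˣ) (a : Fin r → ℝ),
      (∀ i, (x i : F) ∈ (algebraMap A F).range) ∧ (∀ i, 0 < a i) ∧
      (∑ i, c i ⊗ₜ[ℤ] Additive.ofMul (y i) : ℝ ⊗[ℤ] Additive Fˣ)
        = ∑ i, a i ⊗ₜ[ℤ] Additive.ofMul (x i) := by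
  have hord' : ∀ p, IsHeightOnePrime p → _ := fun p hp => hord p hp.1 hp.2.1 hp.2.2
  let T := {p | IsHeightOnePrime p ∧ ∃ i, ord p (Additive.ofMul (y i)) ≠ 0}
  have : Finite T := Set.Finite.to_subtype <|
    (Set.finite_iUnion fun i => finite_setOf_ord_ne_zero hord' (y i)).subset
      fun p ⟨hp, i, hi⟩ => Set.mem_iUnion.mpr ⟨i, hp, hi⟩
  have hc := mem_convexHull_ratCast_of_forall_nonneg
    (fun (p : T) i => (ord p (Additive.ofMul (y i)) : ℚ)) (c := c) fun p => by
      simpa [dotProduct] using hpos p p.2.1.1 p.2.1.2.1 p.2.1.2.2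
  obtain ⟨r, v, lam, hv, hlam, rfl⟩ := exists_fin_pos_sum_smul_of_mem_convexHull hc
  choose w hw hwv using hv
  have hw' : ∀ m p, IsHeightOnePrime p → 0 ≤ ∑ i, w m i * ord p (Additive.ofMul (y i)) := by
    intro m p hp
    by_cases hpT : p ∈ T
    · exact hw m ⟨p, hpT⟩
    · have hp0 : ∀ i, ord p (Additive.ofMul (y i)) = 0 := fun i =>
        by_contra fun hi => hpT ⟨hp, i, hi⟩
      simp [hp0]
  choose N x hN hx htmul using fun m =>
    exists_mem_range_tmul_eq_of_ord_nonneg hord' y (w m) (hw' m)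
  refine ⟨r, x, fun m => lam m / N m, hx, fun m => div_pos (hlam m) (by exact_mod_cast hN m), ?_⟩
  simp only [← htmul, ← hwv, Finset.sum_apply, Pi.smul_apply, Function.comp_apply, smul_eq_mul,
    sum_tmul]
  exact Finset.sum_comm
end

section
/- Let M be a finitely generated ℤ-module and ‖·‖ a norm on M_ℝ := M ⊗_ℤ ℝ. For λ ≥ 0, with ĥ⁰(M, ‖·‖) := log #{x ∈ M : ‖x‖ ≤ 1}, we have ĥ⁰(M, e^{−λ}‖·‖) ≤ ĥ⁰(M, ‖·‖) + λ·rk M + (log 3)·rk M. -/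
/-!
Put `g x = e (1 ⊗ x)` and `R = exp λ ≥ 1`, and pick an integer `m` with `2R ≤ m ≤ 3R`.
After dividing out the kernel of `g`, `M` becomes a free `ℤ`-module of rank at most
`rk M`. Two points of the `R`-ball in the same class modulo `m` differ by `m • z` with
`‖g z‖ ≤ 2R / m ≤ 1`, so the `R`-ball has at most `m ^ rk M` times as many points as the unit
ball; taking logarithms, `log m ≤ λ + log 3`.
-/

open Module QuotientAddGroup TensorProduct

theorem AddMonoidHom.natCard_preimage_eq_natCard_ker_mul {G H : Type*} [AddCommGroup G]
    [AddCommGroup H] (f : G →+ H) (t : Set H) :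
    Nat.card (f ⁻¹' t) = Nat.card f.ker * Nat.card (kerLift f ⁻¹' t) := by
  rw [← Nat.card_prod]
  exact Nat.card_congr (preimageMkEquivAddSubgroupProdSet f.ker (kerLift f ⁻¹' t))

section NormBall

variable {G E : Type*} [AddCommGroup G] [NormedAddCommGroup E] [NormedSpace ℝ E]

theorem natCard_norm_le_le_index_mul (f : G →+ E) {m : ℕ}
    [(nsmulAddMonoidHom (α := G) m).range.FiniteIndex] {R : ℝ} (hR : 1 ≤ R) (hRm : 2 * R ≤ m) :
    Nat.card {x | ‖f x‖ ≤ R} ≤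
      (nsmulAddMonoidHom (α := G) m).range.index * Nat.card {x | ‖f x‖ ≤ 1} := by
  classical
  set H := (nsmulAddMonoidHom (α := G) m).range
  set S := {x | ‖f x‖ ≤ R}
  rcases Set.finite_or_infinite {x | ‖f x‖ ≤ 1} with hfin | hinf
  swap
  · have : S.Infinite := hinf.mono fun x hx => le_trans hx hR
    simp [this.card_eq_zero]
  -- `rep x` is a point of `S` in the coset of `x`, depending only on that coset
  let rep : G → G := fun x => Function.invFunOn (QuotientAddGroup.mk (s := H)) S x
  have hdiv (x : S) : ∃ z : G, m • z = x - rep x ∧ ‖f z‖ ≤ 1 := by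
    have hx : ∃ y ∈ S, (y : G ⧸ H) = x := ⟨x, x.2, rfl⟩
    obtain ⟨z, hz⟩ : (x : G) - rep x ∈ H := by
      simpa [neg_add_eq_sub] using QuotientAddGroup.eq.mp (Function.invFunOn_eq hx)
    rw [nsmulAddMonoidHom_apply] at hz
    refine ⟨z, hz, le_of_mul_le_mul_left ?_ (show (0 : ℝ) < m by linarith)⟩
    calc (m : ℝ) * ‖f z‖ = ‖f x - f (rep x)‖ := by
          rw [← map_sub, ← hz, map_nsmul, RCLike.norm_nsmul ℝ, nsmul_eq_mul]
      _ ≤ R + R := norm_sub_le_of_le x.2 (Function.invFunOn_mem hx)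
      _ ≤ m * 1 := by linarith
  choose z hz hz1 using hdiv
  have : Finite {x | ‖f x‖ ≤ 1} := hfin
  let Φ : S → (G ⧸ H) × {x | ‖f x‖ ≤ 1} := fun x => ((x : G), ⟨z x, hz1 x⟩)
  have hΦ : Function.Injective Φ := by
    intro x y hxy
    simp only [Φ, Prod.mk.injEq, Subtype.mk.injEq] at hxy
    have hrep : rep x = rep y := by simp only [rep, hxy.1]
    have := (hz x).symm.trans (hxy.2 ▸ hz y)
    exact Subtype.ext (by simpa [hrep] using this)
  calc Nat.card S ≤ Nat.card ((G ⧸ H) × {x | ‖f x‖ ≤ 1}) := Nat.card_le_card_of_injective Φ hΦ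
    _ = _ := by rw [Nat.card_prod, AddSubgroup.index]

theorem natCard_norm_le_le_pow_finrank_mul [Module.Finite ℤ G] (f : G →+ E) {m : ℕ} {R : ℝ}
    (hR : 1 ≤ R) (hRm : 2 * R ≤ m) :
    Nat.card {x | ‖f x‖ ≤ R} ≤ m ^ finrank ℤ G * Nat.card {x | ‖f x‖ ≤ 1} := by
  have : IsAddTorsionFree E := .of_isTorsionFree ℝ E
  have : Module.IsTorsionFree ℤ (G ⧸ f.ker) :=
    (kerLift_injective f).moduleIsTorsionFree _ (map_zsmul (kerLift f))
  have : Module.Finite ℤ (G ⧸ f.ker) :=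
    .of_surjective (mk' f.ker).toIntLinearMap (mk'_surjective f.ker)
  have : Module.Free ℤ (G ⧸ f.ker) := Module.free_of_finite_type_torsion_free'
  have hrank : finrank ℤ (G ⧸ f.ker) ≤ finrank ℤ G :=
    LinearMap.finrank_le_finrank_of_surjective (f := (mk' f.ker).toIntLinearMap)
      (mk'_surjective f.ker)
  have hm : 0 < m := by exact_mod_cast (show (0 : ℝ) < m by linarith)
  have : (nsmulAddMonoidHom (α := G ⧸ f.ker) m).range.FiniteIndex :=
    ⟨by rw [AddSubgroup.index_range_nsmul]; positivity⟩
  calc Nat.card {x | ‖f x‖ ≤ R}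
      = Nat.card f.ker * Nat.card {y | ‖kerLift f y‖ ≤ R} :=
        f.natCard_preimage_eq_natCard_ker_mul {v | ‖v‖ ≤ R}
    _ ≤ Nat.card f.ker * ((nsmulAddMonoidHom (α := G ⧸ f.ker) m).range.index *
          Nat.card {y | ‖kerLift f y‖ ≤ 1}) :=
        Nat.mul_le_mul_left _ (natCard_norm_le_le_index_mul (kerLift f) hR hRm)
    _ = m ^ finrank ℤ (G ⧸ f.ker) * (Nat.card f.ker * Nat.card {y | ‖kerLift f y‖ ≤ 1}) := by
        rw [AddSubgroup.index_range_nsmul]; ring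
    _ = m ^ finrank ℤ (G ⧸ f.ker) * Nat.card {x | ‖f x‖ ≤ 1} :=
        congrArg _ (f.natCard_preimage_eq_natCard_ker_mul {v | ‖v‖ ≤ 1}).symm
    _ ≤ m ^ finrank ℤ G * Nat.card {x | ‖f x‖ ≤ 1} := by gcongr

end NormBall

theorem exists_nat_two_mul_le_le_three_mul {R : ℝ} (hR : 1 ≤ R) :
    ∃ m : ℕ, 2 * R ≤ m ∧ (m : ℝ) ≤ 3 * R :=
  ⟨⌈2 * R⌉₊, Nat.le_ceil _, by linarith [Nat.ceil_lt_add_one (show 0 ≤ 2 * R by linarith)]⟩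

theorem log_natCast_le_log_add_log_of_le_mul {a b c : ℕ} (h : a ≤ b * c) :
    Real.log a ≤ Real.log b + Real.log c := by
  rcases Nat.eq_zero_or_pos a with rfl | ha
  · simpa using add_nonneg (Real.log_natCast_nonneg b) (Real.log_natCast_nonneg c)
  · have hb : 0 < b := Nat.pos_of_mul_pos_right (ha.trans_le h)
    have hc : 0 < c := Nat.pos_of_mul_pos_left (ha.trans_le h)
    rw [← Real.log_mul (by positivity) (by positivity)]
    exact Real.log_le_log (by exact_mod_cast ha) (by exact_mod_cast h)

/-- Let `M` be a finitely generated `ℤ`-module and `‖·‖` a norm on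
`M_ℝ = ℝ ⊗_ℤ M` (realized as a normed real vector space `E` via a linear isomorphism `e`).
For `λ ≥ 0`, with `ĥ⁰(M, ‖·‖) = log #{x ∈ M : ‖x‖ ≤ 1}`, one has
`ĥ⁰(M, e^{−λ}‖·‖) ≤ ĥ⁰(M, ‖·‖) + λ·rk M + (log 3)·rk M`; note that
`ĥ⁰(M, e^{−λ}‖·‖) = log #{x ∈ M : ‖x‖ ≤ e^λ}`. -/
theorem stmt7 (M : Type*) [AddCommGroup M] [Module.Finite ℤ M]
    (E : Type*) [NormedAddCommGroup E] [NormedSpace ℝ E]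
    (e : (ℝ ⊗[ℤ] M) ≃ₗ[ℝ] E)
    (lam : ℝ) (hlam : 0 ≤ lam) :
    Real.log (Nat.card {x : M | ‖e ((1 : ℝ) ⊗ₜ[ℤ] x)‖ ≤ Real.exp lam}) ≤
      Real.log (Nat.card {x : M | ‖e ((1 : ℝ) ⊗ₜ[ℤ] x)‖ ≤ 1})
        + lam * Module.finrank ℤ M + Real.log 3 * Module.finrank ℤ M := by
  let g : M →+ E := ((e.toLinearMap.restrictScalars ℤ).comp (mk ℤ ℝ M 1)).toAddMonoidHom
  have hR : 1 ≤ Real.exp lam := Real.one_le_exp hlam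
  obtain ⟨m, h2m, hm3⟩ := exists_nat_two_mul_le_le_three_mul hR
  have hlog_m : Real.log m ≤ lam + Real.log 3 := by
    calc Real.log m ≤ Real.log (3 * Real.exp lam) := Real.log_le_log (by linarith) hm3
      _ = lam + Real.log 3 := by
        rw [Real.log_mul (by norm_num) (by positivity), Real.log_exp, add_comm]
  have hcount : Real.log (Nat.card {x : M | ‖e ((1 : ℝ) ⊗ₜ[ℤ] x)‖ ≤ Real.exp lam}) ≤
      Real.log ((m ^ finrank ℤ M : ℕ) : ℝ) +
        Real.log (Nat.card {x : M | ‖e ((1 : ℝ) ⊗ₜ[ℤ] x)‖ ≤ 1}) :=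
    log_natCast_le_log_add_log_of_le_mul (natCard_norm_le_le_pow_finrank_mul g hR h2m)
  rw [Nat.cast_pow, Real.log_pow] at hcount
  linarith [mul_le_mul_of_nonneg_left hlog_m (Nat.cast_nonneg (finrank ℤ M) : (0 : ℝ) ≤ _)]
end

section
/- Let V be a real vector space, W a subspace, and ⟨·,…,·⟩ : W × V^{l−1} → ℝ a symmetric multilinear map (symmetric under all permutations of arguments whenever the entries remain in the appropriate domains). Then for a₁,…,a_l, b₁,…,b_l ∈ W and x₁,…,x_l ∈ V: ∑_{∅≠I⊆{1,…,l}} ⟨∏_{i∈I}(a_i + b_i) · ∏_{j∉I} x_j⟩ = ∑_{∅≠I⊆{1,…,l}} ⟨∏_{i∈I} b_i · ∏_{j∉I} x_j⟩ + ∑_{∅≠I⊆{1,…,l}} ⟨∏_{i∈I} a_i · ∏_{j∉I}(x_j + b_j)⟩, where ⟨∏ z_i⟩ denotes the multilinear form evaluated on the tuple (z_1,…,z_l) (well-defined by symmetry when at least one argument lies in W). -/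
/-- Evaluation of a symmetric multilinear form `f : W × V^{l-1} → ℝ` (given as a linear map
from `W` to multilinear maps on `V^{l-1}`, with `l = m + 2`) on the `l`-tuple whose entries
at the nonempty index set `I` are `w i ∈ W` and at the remaining indices are `z j ∈ V`; the
slot used as the `W`-argument is the least element of `I` (by symmetry the choice does not
matter). -/
noncomputable def eval12 {V : Type*} [AddCommGroup V] [Module ℝ V] {W : Submodule ℝ V}
    {m : ℕ} (f : W →ₗ[ℝ] MultilinearMap ℝ (fun _ : Fin (m + 1) => V) ℝ)
    (I : Finset (Fin (m + 2))) (w : Fin (m + 2) → W) (z : Fin (m + 2) → V) : ℝ :=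
  if h : I.Nonempty then
    f (w (I.min' h)) (fun j =>
      if (I.min' h).succAbove j ∈ I then ((w ((I.min' h).succAbove j) : V))
      else z ((I.min' h).succAbove j))
  else 0

section Aux

variable {V : Type*} [AddCommGroup V] [Module ℝ V] {W : Submodule ℝ V} {m : ℕ}
  (f : W →ₗ[ℝ] MultilinearMap ℝ (fun _ : Fin (m + 1) => V) ℝ)

/-- Evaluation with the `W`-slot at position `k`; the value of `v` at `k` is ignored. -/
noncomputable def evalAt (k : Fin (m + 2)) (w : W) (v : Fin (m + 2) → V) : ℝ :=
  f w (fun j => v (k.succAbove j))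

lemma evalAt_congr {k : Fin (m + 2)} {w : W} {v v' : Fin (m + 2) → V}
    (h : ∀ i, i ≠ k → v i = v' i) : evalAt f k w v = evalAt f k w v' := by
  unfold evalAt
  congr 1
  funext j
  exact h _ (Fin.succAbove_ne k j)

lemma eval12_eq (I : Finset (Fin (m + 2))) (h : I.Nonempty) (w : Fin (m + 2) → W)
    (z : Fin (m + 2) → V) :
    eval12 f I w z = evalAt f (I.min' h) (w (I.min' h))
      (fun i => if i ∈ I then ((w i : V)) else z i) := by
  unfold eval12 evalAt
  rw [dif_pos h]

lemma f_cons
    (hsymm2 : ∀ (w : W) (σ : Equiv.Perm (Fin (m + 1))) (v : Fin (m + 1) → V),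
      f w (v ∘ σ) = f w v)
    (w : W) (v : Fin (m + 1) → V) (j₀ : Fin (m + 1)) :
    f w v = f w (Fin.cons (v j₀) (fun t => v (j₀.succAbove t))) := by
  rw [← hsymm2 w j₀.cycleRange⁻¹ v]
  congr 1
  funext t
  induction t using Fin.cases with
  | zero => simp [Function.comp, Equiv.Perm.inv_def, Fin.cycleRange_symm_zero]
  | succ i => simp [Function.comp, Equiv.Perm.inv_def, Fin.cycleRange_symm_succ]

lemma range_sa (p : Fin (m + 2)) (q : Fin (m + 1)) :
    Set.range (fun t => p.succAbove (q.succAbove t)) = {t | t ≠ p ∧ t ≠ p.succAbove q} := by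
  ext t
  simp only [Set.mem_range, Set.mem_setOf_eq]
  constructor
  · rintro ⟨s, rfl⟩
    exact ⟨Fin.succAbove_ne _ _, fun hc =>
      Fin.succAbove_ne q s (Fin.succAbove_right_injective hc)⟩
  · rintro ⟨h1, h2⟩
    obtain ⟨s, hs⟩ := Fin.exists_succAbove_eq h1
    have hsq : s ≠ q := by rintro rfl; exact h2 hs.symm
    obtain ⟨u, hu⟩ := Fin.exists_succAbove_eq hsq
    exact ⟨u, by rw [hu, hs]⟩

lemma evalAt_swap
    (hsymm1 : ∀ (w w' : W) (v : Fin m → V),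
      f w (Fin.cons (w' : V) v) = f w' (Fin.cons (w : V) v))
    (hsymm2 : ∀ (w : W) (σ : Equiv.Perm (Fin (m + 1))) (v : Fin (m + 1) → V),
      f w (v ∘ σ) = f w v)
    {k k' : Fin (m + 2)} (hne : k ≠ k') (w w' : W)
    {v : Fin (m + 2) → V} (hk : v k = (w : V)) (hk' : v k' = (w' : V)) :
    evalAt f k w v = evalAt f k' w' v := by
  obtain ⟨j, hj⟩ := Fin.exists_succAbove_eq hne.symm
  obtain ⟨j', hj'⟩ := Fin.exists_succAbove_eq hne
  have hmono : ∀ (p : Fin (m + 2)) (q : Fin (m + 1)),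
      StrictMono (fun t => p.succAbove (q.succAbove t)) :=
    fun p q => (Fin.strictMono_succAbove p).comp (Fin.strictMono_succAbove q)
  have key : (fun t => k.succAbove (j.succAbove t)) = fun t => k'.succAbove (j'.succAbove t) := by
    haveI : WellFoundedLT (Fin m) := inferInstance
    refine (StrictMono.range_inj (β := Fin m) (γ := Fin (m + 2)) (hmono k j) (hmono k' j')).1 ?_
    rw [range_sa, range_sa, hj, hj']
    ext t
    simp only [Set.mem_setOf_eq]
    tauto
  unfold evalAt
  rw [f_cons f hsymm2 w (fun t => v (k.succAbove t)) j,
      f_cons f hsymm2 w' (fun t => v (k'.succAbove t)) j']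
  simp only [hj, hj', hk, hk']
  have hrest : (fun t => v (k.succAbove (j.succAbove t)))
      = fun t => v (k'.succAbove (j'.succAbove t)) := by
    funext t
    rw [congrFun key t]
  rw [hrest]
  exact hsymm1 w w' _

lemma evalAt_expand (k : Fin (m + 2)) (w : W) (p q X : Fin (m + 2) → V)
    (S : Finset (Fin (m + 2))) (hkS : k ∉ S) :
    evalAt f k w (fun i => if i ∈ S then p i + q i else X i)
      = ∑ s ∈ S.powerset, evalAt f k w
          (fun i => if i ∈ s then p i else if i ∈ S then q i else X i) := by
  classical
  set S' : Finset (Fin (m + 1)) := Finset.univ.filter (fun j => k.succAbove j ∈ S) with hS'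
  have hSmem : ∀ j, j ∈ S' ↔ k.succAbove j ∈ S := by intro j; simp [hS']
  set U : Fin (m + 1) → V := fun j => if k.succAbove j ∈ S then p (k.succAbove j) else 0 with hU
  set U' : Fin (m + 1) → V :=
    fun j => if k.succAbove j ∈ S then q (k.succAbove j) else X (k.succAbove j) with hU'
  have step1 : (fun j => (fun i => if i ∈ S then p i + q i else X i) (k.succAbove j))
      = S'.piecewise (U + U') U' := by
    funext j
    by_cases h : j ∈ S'
    · rw [Finset.piecewise_eq_of_mem _ _ _ h]
      have hm := (hSmem j).1 h
      simp [hU, hU', hm]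
    · rw [Finset.piecewise_eq_of_notMem _ _ _ h]
      have hm : k.succAbove j ∉ S := fun hc => h ((hSmem j).2 hc)
      simp [hU', hm]
  unfold evalAt
  rw [step1, MultilinearMap.map_piecewise_add]
  refine Finset.sum_bij (i := fun s' _ => s'.map (Fin.succAboveEmb k)) ?_ ?_ ?_ ?_
  · intro s' hs'
    rw [Finset.mem_powerset] at hs' ⊢
    intro t ht
    obtain ⟨u, hu, rfl⟩ := Finset.mem_map.1 ht
    exact (hSmem u).1 (hs' hu)
  · intro s1 h1 s2 h2 h
    exact Finset.map_injective _ h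
  · intro s hs
    rw [Finset.mem_powerset] at hs
    refine ⟨Finset.univ.filter (fun j => k.succAbove j ∈ s), ?_, ?_⟩
    · rw [Finset.mem_powerset]
      intro j hj
      rw [hSmem]
      exact hs (by simpa using hj)
    · ext t
      simp only [Finset.mem_map, Finset.mem_filter, Finset.mem_univ, true_and,
        Fin.succAboveEmb_apply]
      constructor
      · rintro ⟨u, hu, rfl⟩; exact hu
      · intro ht
        have htk : t ≠ k := by rintro rfl; exact hkS (hs ht)
        obtain ⟨u, hu⟩ := Fin.exists_succAbove_eq htk
        exact ⟨u, by rw [hu]; exact ht, hu⟩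
  · intro s' hs'
    rw [Finset.mem_powerset] at hs'
    congr 1
    funext j
    by_cases h : j ∈ s'
    · rw [Finset.piecewise_eq_of_mem _ _ _ h]
      have h1 : k.succAbove j ∈ s'.map (Fin.succAboveEmb k) :=
        Finset.mem_map_of_mem _ h
      have h2 : k.succAbove j ∈ S := (hSmem j).1 (hs' h)
      simp [hU, h1, h2]
    · rw [Finset.piecewise_eq_of_notMem _ _ _ h]
      have h1 : k.succAbove j ∉ s'.map (Fin.succAboveEmb k) := by
        simp only [Finset.mem_map, Fin.succAboveEmb_apply]
        rintro ⟨u, hu, he⟩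
        have : u = j := Fin.succAbove_right_injective he
        exact h (this ▸ hu)
      simp [hU', h1]


variable (a b : Fin (m + 2) → W) (x : Fin (m + 2) → V)

/-- The value of the form with `a` on `A`, `b` on `B`, `x` elsewhere. -/
noncomputable def tval (A B : Finset (Fin (m + 2))) : ℝ :=
  eval12 f (A ∪ B) (fun i => if i ∈ A then a i else b i) x

lemma tval_eq_evalAt
    (hsymm1 : ∀ (w w' : W) (v : Fin m → V),
      f w (Fin.cons (w' : V) v) = f w' (Fin.cons (w : V) v))
    (hsymm2 : ∀ (w : W) (σ : Equiv.Perm (Fin (m + 1))) (v : Fin (m + 1) → V),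
      f w (v ∘ σ) = f w v)
    (A B : Finset (Fin (m + 2))) (k : Fin (m + 2)) (hkAB : k ∈ A ∪ B) :
    tval f a b x A B = evalAt f k (if k ∈ A then a k else b k)
      (fun i => if i ∈ A ∪ B then (if i ∈ A then (a i : V) else (b i : V)) else x i) := by
  classical
  have h : (A ∪ B).Nonempty := ⟨k, hkAB⟩
  rw [tval, eval12_eq f _ h]
  have hv : (fun i => if i ∈ A ∪ B then (((if i ∈ A then a i else b i : W)) : V) else x i)
      = fun i => if i ∈ A ∪ B then (if i ∈ A then (a i : V) else (b i : V)) else x i := by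
    funext i
    by_cases hi : i ∈ A ∪ B <;> simp [hi, apply_ite (fun (w : W) => (w : V))]
  rw [hv]
  by_cases hk : k = (A ∪ B).min' h
  · subst hk; rfl
  · have hk₀ : (A ∪ B).min' h ∈ A ∪ B := Finset.min'_mem _ _
    refine evalAt_swap f hsymm1 hsymm2 (Ne.symm hk) _ _ ?_ ?_
    · simp [hk₀, apply_ite (fun (w : W) => (w : V))]
    · simp [hkAB, apply_ite (fun (w : W) => (w : V))]

lemma tval_empty (B : Finset (Fin (m + 2))) : tval f a b x ∅ B = eval12 f B b x := by
  rw [tval, Finset.empty_union]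
  have hw : (fun i => if i ∈ (∅ : Finset (Fin (m + 2))) then a i else b i) = b := by
    funext i; simp
  rw [hw]


lemma lhs_expand
    (hsymm1 : ∀ (w w' : W) (v : Fin m → V),
      f w (Fin.cons (w' : V) v) = f w' (Fin.cons (w : V) v))
    (hsymm2 : ∀ (w : W) (σ : Equiv.Perm (Fin (m + 1))) (v : Fin (m + 1) → V),
      f w (v ∘ σ) = f w v)
    (I : Finset (Fin (m + 2))) (h : I.Nonempty) :
    eval12 f I (a + b) x = ∑ A ∈ I.powerset, tval f a b x A (I \ A) := by
  classical
  rw [eval12_eq f I h (a + b) x]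
  set k := I.min' h with hkdef
  have hkI : k ∈ I := I.min'_mem h
  have hkE : k ∉ I.erase k := Finset.notMem_erase k I
  -- split linearity in the W-slot
  have hsplit : evalAt f k ((a + b) k) (fun i => if i ∈ I then (((a + b) i : W) : V) else x i)
      = evalAt f k (a k) (fun i => if i ∈ I then (((a + b) i : W) : V) else x i)
        + evalAt f k (b k) (fun i => if i ∈ I then (((a + b) i : W) : V) else x i) := by
    unfold evalAt
    rw [show ((a + b) k) = a k + b k from rfl, map_add, MultilinearMap.add_apply]
  rw [hsplit]
  have hcong : ∀ i, i ≠ k →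
      (if i ∈ I then (((a + b) i : W) : V) else x i)
        = (if i ∈ I.erase k then (a i : V) + (b i : V) else x i) := by
    intro i hik
    by_cases hi : i ∈ I
    · have hie : i ∈ I.erase k := Finset.mem_erase.2 ⟨hik, hi⟩
      simp [hi, hie]
    · have hie : i ∉ I.erase k := fun hc => hi (Finset.mem_of_mem_erase hc)
      simp [hi, hie]
  have hva : evalAt f k (a k) (fun i => if i ∈ I then (((a + b) i : W) : V) else x i)
      = ∑ s ∈ (I.erase k).powerset, evalAt f k (a k)
          (fun i => if i ∈ s then (a i : V) else if i ∈ I.erase k then (b i : V) else x i) := by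
    rw [evalAt_congr f hcong]
    exact evalAt_expand f k (a k) (fun i => (a i : V)) (fun i => (b i : V)) x (I.erase k) hkE
  have hvb : evalAt f k (b k) (fun i => if i ∈ I then (((a + b) i : W) : V) else x i)
      = ∑ s ∈ (I.erase k).powerset, evalAt f k (b k)
          (fun i => if i ∈ s then (a i : V) else if i ∈ I.erase k then (b i : V) else x i) := by
    rw [evalAt_congr f hcong]
    exact evalAt_expand f k (b k) (fun i => (a i : V)) (fun i => (b i : V)) x (I.erase k) hkE
  rw [hva, hvb]
  have ha_term : ∀ s ∈ (I.erase k).powerset,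
      evalAt f k (a k)
          (fun i => if i ∈ s then (a i : V) else if i ∈ I.erase k then (b i : V) else x i)
        = tval f a b x (insert k s) (I \ insert k s) := by
    intro s hs
    rw [Finset.mem_powerset] at hs
    have hsI : s ⊆ I := hs.trans (Finset.erase_subset k I)
    have hsub : insert k s ⊆ I := Finset.insert_subset hkI hsI
    have hU : insert k s ∪ (I \ insert k s) = I := Finset.union_sdiff_of_subset hsub
    have hks : k ∈ insert k s ∪ (I \ insert k s) := by rw [hU]; exact hkI
    rw [tval_eq_evalAt f a b x hsymm1 hsymm2 _ _ k hks,
      if_pos (Finset.mem_insert_self k s)]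
    apply evalAt_congr
    intro i hik
    rw [hU]
    by_cases his : i ∈ s
    · have hiI : i ∈ I := hsI his
      have hii : i ∈ insert k s := Finset.mem_insert_of_mem his
      simp [his, hiI, hii]
    · have hni : i ∉ insert k s := by
        simp only [Finset.mem_insert]
        push_neg
        exact ⟨hik, his⟩
      by_cases hiI : i ∈ I
      · have hie : i ∈ I.erase k := Finset.mem_erase.2 ⟨hik, hiI⟩
        simp [his, hie, hiI, hni]
      · have hie : i ∉ I.erase k := fun hc => hiI (Finset.mem_of_mem_erase hc)
        simp [his, hie, hiI, hni]
  have hb_term : ∀ s ∈ (I.erase k).powerset,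
      evalAt f k (b k)
          (fun i => if i ∈ s then (a i : V) else if i ∈ I.erase k then (b i : V) else x i)
        = tval f a b x s (I \ s) := by
    intro s hs
    rw [Finset.mem_powerset] at hs
    have hsI : s ⊆ I := hs.trans (Finset.erase_subset k I)
    have hks : k ∉ s := fun hc => hkE (hs hc)
    have hU : s ∪ (I \ s) = I := Finset.union_sdiff_of_subset hsI
    have hkin : k ∈ s ∪ (I \ s) := by rw [hU]; exact hkI
    rw [tval_eq_evalAt f a b x hsymm1 hsymm2 _ _ k hkin, if_neg hks]
    apply evalAt_congr
    intro i hik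
    rw [hU]
    by_cases his : i ∈ s
    · have hiI : i ∈ I := hsI his
      simp [his, hiI]
    · by_cases hiI : i ∈ I
      · have hie : i ∈ I.erase k := Finset.mem_erase.2 ⟨hik, hiI⟩
        simp [his, hie, hiI]
      · have hie : i ∉ I.erase k := fun hc => hiI (Finset.mem_of_mem_erase hc)
        simp [his, hie, hiI]
  rw [Finset.sum_congr rfl ha_term, Finset.sum_congr rfl hb_term]
  have hfinal : ∑ A ∈ I.powerset, tval f a b x A (I \ A)
      = (∑ s ∈ (I.erase k).powerset, tval f a b x s (I \ s))
        + ∑ s ∈ (I.erase k).powerset, tval f a b x (insert k s) (I \ insert k s) := by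
    conv_lhs => rw [← Finset.insert_erase hkI]
    rw [Finset.sum_powerset_insert hkE]
    congr 1
    · exact Finset.sum_congr rfl fun s _ => by rw [Finset.insert_erase hkI]
    · exact Finset.sum_congr rfl fun s _ => by rw [Finset.insert_erase hkI]
  rw [hfinal, add_comm]

lemma rhs2_expand
    (hsymm1 : ∀ (w w' : W) (v : Fin m → V),
      f w (Fin.cons (w' : V) v) = f w' (Fin.cons (w : V) v))
    (hsymm2 : ∀ (w : W) (σ : Equiv.Perm (Fin (m + 1))) (v : Fin (m + 1) → V),
      f w (v ∘ σ) = f w v)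
    (A : Finset (Fin (m + 2))) (h : A.Nonempty) :
    eval12 f A a (x + fun j => ((b j : V))) = ∑ s ∈ Aᶜ.powerset, tval f a b x A s := by
  classical
  rw [eval12_eq f A h a (x + fun j => ((b j : V)))]
  set k := A.min' h with hkdef
  have hkA : k ∈ A := A.min'_mem h
  have hkC : k ∉ Aᶜ := by simp [Finset.mem_compl, hkA]
  have hv : (fun i => if i ∈ A then ((a i : V)) else (x + fun j => ((b j : V))) i)
      = fun i => if i ∈ Aᶜ then (b i : V) + x i else (a i : V) := by
    funext i
    by_cases hi : i ∈ A
    · simp [hi, Finset.mem_compl]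
    · simp [hi, Finset.mem_compl, add_comm]
  rw [hv, evalAt_expand f k (a k) (fun i => (b i : V)) x (fun i => (a i : V)) Aᶜ hkC]
  refine Finset.sum_congr rfl fun s hs => ?_
  rw [Finset.mem_powerset] at hs
  rw [tval_eq_evalAt f a b x hsymm1 hsymm2 A s k (Finset.mem_union_left _ hkA), if_pos hkA]
  apply evalAt_congr
  intro i _
  by_cases his : i ∈ s
  · have hiA : i ∉ A := by have := hs his; simpa [Finset.mem_compl] using this
    have hiU : i ∈ A ∪ s := Finset.mem_union_right _ his
    simp [his, hiA, hiU]
  · by_cases hiA : i ∈ A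
    · have hiU : i ∈ A ∪ s := Finset.mem_union_left _ hiA
      have hiC : i ∉ Aᶜ := by simp [Finset.mem_compl, hiA]
      simp [his, hiA, hiU, hiC]
    · have hiU : i ∉ A ∪ s := by simp [Finset.mem_union, hiA, his]
      have hiC : i ∈ Aᶜ := by simp [Finset.mem_compl, hiA]
      simp [his, hiA, hiU, hiC]

end Aux

lemma combin {alpha : Type*} [DecidableEq alpha] [Fintype alpha]
    (T : Finset alpha -> Finset alpha -> Real) :
    (Finset.univ.filter (fun I : Finset alpha => I.Nonempty)).sum
        (fun I => I.powerset.sum (fun A => T A (I \ A)))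
      = (Finset.univ.filter (fun B : Finset alpha => B.Nonempty)).sum (fun B => T (∅ : Finset alpha) B)
        + (Finset.univ.filter (fun A : Finset alpha => A.Nonempty)).sum
            (fun A => (Aᶜ : Finset alpha).powerset.sum (fun s => T A s)) := by
  classical
  have hps : ∀ (I : Finset alpha), I.powerset = Finset.univ.filter (fun A => A ⊆ I) := by
    intro I; ext A; simp
  set G : Finset alpha → Finset alpha → ℝ :=
    fun A B => if Disjoint A B ∧ (A ∪ B).Nonempty then T A B else 0 with hG
  have h1 : (Finset.univ.filter (fun I : Finset alpha => I.Nonempty)).sum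
        (fun I => I.powerset.sum (fun A => T A (I \ A)))
      = ∑ A : Finset alpha, ∑ B : Finset alpha, G A B := by
    calc (Finset.univ.filter (fun I : Finset alpha => I.Nonempty)).sum
          (fun I => I.powerset.sum (fun A => T A (I \ A)))
        = ∑ I : Finset alpha, ∑ A : Finset alpha,
            (if A ⊆ I ∧ I.Nonempty then T A (I \ A) else 0) := by
          rw [Finset.sum_filter]
          refine Finset.sum_congr rfl fun I _ => ?_
          by_cases hI : I.Nonempty
          · rw [if_pos hI, hps, Finset.sum_filter]
            exact Finset.sum_congr rfl fun A _ => by simp [hI]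
          · simp [hI]
      _ = ∑ A : Finset alpha, ∑ I : Finset alpha,
            (if A ⊆ I ∧ I.Nonempty then T A (I \ A) else 0) := Finset.sum_comm
      _ = ∑ A : Finset alpha, ∑ B : Finset alpha, G A B := by
          refine Finset.sum_congr rfl fun A _ => ?_
          rw [← Finset.sum_filter]
          have : ∑ B : Finset alpha, G A B
              = ∑ B ∈ Finset.univ.filter (fun B => Disjoint A B ∧ (A ∪ B).Nonempty), T A B := by
            rw [Finset.sum_filter]
          rw [this]
          refine Finset.sum_nbij' (i := fun I => I \ A) (j := fun B => A ∪ B) ?_ ?_ ?_ ?_ ?_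
          · intro I hI
            rw [Finset.mem_filter] at hI ⊢
            refine ⟨Finset.mem_univ _, Finset.disjoint_sdiff, ?_⟩
            rw [Finset.union_sdiff_of_subset hI.2.1]
            exact hI.2.2
          · intro B hB
            rw [Finset.mem_filter] at hB ⊢
            exact ⟨Finset.mem_univ _, Finset.subset_union_left, hB.2.2⟩
          · intro I hI
            rw [Finset.mem_filter] at hI
            exact Finset.union_sdiff_of_subset hI.2.1
          · intro B hB
            rw [Finset.mem_filter] at hB
            exact Finset.union_sdiff_cancel_left hB.2.1
          · intro I _
            rfl
  have hfe : Finset.univ.filter (fun A : Finset alpha => A.Nonempty)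
      = Finset.univ.erase (∅ : Finset alpha) := by
    ext A
    simp [Finset.nonempty_iff_ne_empty]
  have h2 : (Finset.univ.filter (fun B : Finset alpha => B.Nonempty)).sum
        (fun B => T (∅ : Finset alpha) B)
      = ∑ B : Finset alpha, G (∅ : Finset alpha) B := by
    rw [Finset.sum_filter]
    refine Finset.sum_congr rfl fun B _ => ?_
    simp [hG]
  have h3 : (Finset.univ.filter (fun A : Finset alpha => A.Nonempty)).sum
        (fun A => (Aᶜ : Finset alpha).powerset.sum (fun s => T A s))
      = ∑ A ∈ Finset.univ.erase (∅ : Finset alpha), ∑ B : Finset alpha, G A B := by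
    rw [hfe]
    refine Finset.sum_congr rfl fun A hA => ?_
    have hAne : A.Nonempty := by
      rw [Finset.nonempty_iff_ne_empty]
      exact (Finset.mem_erase.1 hA).1
    rw [hps, Finset.sum_filter]
    refine Finset.sum_congr rfl fun B _ => ?_
    have hiff : B ⊆ Aᶜ ↔ Disjoint A B := by
      constructor
      · intro hB
        rw [Finset.disjoint_left]
        intro t htA htB
        exact (Finset.mem_compl.1 (hB htB)) htA
      · intro hd t htB
        rw [Finset.mem_compl]
        intro htA
        exact (Finset.disjoint_left.1 hd) htA htB
    by_cases hB : B ⊆ Aᶜ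
    · rw [if_pos hB]
      have h' : Disjoint A B ∧ (A ∪ B).Nonempty :=
        ⟨hiff.1 hB, Finset.Nonempty.mono Finset.subset_union_left hAne⟩
      exact (if_pos h').symm
    · rw [if_neg hB]
      have h' : ¬(Disjoint A B ∧ (A ∪ B).Nonempty) := fun hc => hB (hiff.2 hc.1)
      exact (if_neg h').symm
  rw [h1, h2, h3]
  exact (Finset.add_sum_erase _ _ (Finset.mem_univ (∅ : Finset alpha))).symm

/-- Let `V` be a real vector space, `W` a subspace, and
`⟨·,…,·⟩ : W × V^{l−1} → ℝ` a symmetric multilinear map (symmetric under all permutations of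
arguments whenever the entries remain in the appropriate domains).  Then for
`a₁,…,a_l, b₁,…,b_l ∈ W` and `x₁,…,x_l ∈ V` (here `l = m + 2`):
`∑_{∅≠I⊆{1,…,l}} ⟨∏_{i∈I}(aᵢ + bᵢ) ∏_{j∉I} x_j⟩
  = ∑_{∅≠I} ⟨∏_{i∈I} bᵢ ∏_{j∉I} x_j⟩ + ∑_{∅≠I} ⟨∏_{i∈I} aᵢ ∏_{j∉I} (x_j + b_j)⟩`. -/
theorem stmt12 {V : Type*} [AddCommGroup V] [Module ℝ V] {W : Submodule ℝ V}
    {m : ℕ} (f : W →ₗ[ℝ] MultilinearMap ℝ (fun _ : Fin (m + 1) => V) ℝ)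
    (hsymm1 : ∀ (w w' : W) (v : Fin m → V),
      f w (Fin.cons (w' : V) v) = f w' (Fin.cons (w : V) v))
    (hsymm2 : ∀ (w : W) (σ : Equiv.Perm (Fin (m + 1))) (v : Fin (m + 1) → V),
      f w (v ∘ σ) = f w v)
    (a b : Fin (m + 2) → W) (x : Fin (m + 2) → V) :
    ∑ I ∈ Finset.univ.filter (fun I : Finset (Fin (m + 2)) => I.Nonempty),
        eval12 f I (a + b) x
      = (∑ I ∈ Finset.univ.filter (fun I : Finset (Fin (m + 2)) => I.Nonempty),
          eval12 f I b x)
        + ∑ I ∈ Finset.univ.filter (fun I : Finset (Fin (m + 2)) => I.Nonempty),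
            eval12 f I a (x + fun j => ((b j : V))) := by
  classical
  have hL : ∀ I ∈ Finset.univ.filter (fun I : Finset (Fin (m + 2)) => I.Nonempty),
      eval12 f I (a + b) x = ∑ A ∈ I.powerset, tval f a b x A (I \ A) :=
    fun I hI => lhs_expand f a b x hsymm1 hsymm2 I (Finset.mem_filter.1 hI).2
  have hM : ∀ B ∈ Finset.univ.filter (fun B : Finset (Fin (m + 2)) => B.Nonempty),
      eval12 f B b x = tval f a b x ∅ B :=
    fun B _ => (tval_empty f a b x B).symm
  have hR : ∀ A ∈ Finset.univ.filter (fun A : Finset (Fin (m + 2)) => A.Nonempty),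
      eval12 f A a (x + fun j => ((b j : V))) = ∑ s ∈ Aᶜ.powerset, tval f a b x A s :=
    fun A hA => rhs2_expand f a b x hsymm1 hsymm2 A (Finset.mem_filter.1 hA).2
  rw [Finset.sum_congr rfl hL, Finset.sum_congr rfl hM, Finset.sum_congr rfl hR]
  exact combin (tval f a b x)
end

section
/- Stone–Weierstrass via lattice conditions: Let T be a compact Hausdorff topological space and Σ ⊆ C⁰(T) a subset such that (1) Σ separates points of T, (2) Σ contains a nonzero real constant function, (3) Σ is a ℚ-vector subspace of C⁰(T), and (4) Σ is closed under pointwise maximum: f, g ∈ Σ ⟹ max{f,g} ∈ Σ. Then Σ is dense in C⁰(T) for the supremum norm. -/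
/-!
The closure `L` of `S` is again closed under `+`, `⊔` and rational scaling, since these operations
are continuous; as `ℚ` is dense in `ℝ`, `L` is even a real subspace, hence closed under
`f ⊓ g = -(-f ⊔ -g)`. Rescaling the nonzero constant puts every constant in `L`, and then
affine combinations `a • f + b` of a separating `f` interpolate any two values at two points.
So `L` is a sublattice that separates points strongly, and the lattice form of the
Stone–Weierstrass theorem shows that `L` is everything.
-/

open Set

namespace ContinuousMap

instance {α β : Type*} [TopologicalSpace α] [LocallyCompactSpace α] [TopologicalSpace β]
    [SemilatticeSup β] [ContinuousSup β] : ContinuousSup C(α, β) :=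
  ⟨continuous_of_continuous_uncurry _ <|
    (continuous_eval.comp (continuous_fst.prodMap continuous_id)).sup
      (continuous_eval.comp (continuous_snd.prodMap continuous_id))⟩

theorem separatesPointsStrongly_of_one_mem {X 𝕜 : Type*} [TopologicalSpace X] [Field 𝕜]
    [TopologicalSpace 𝕜] [IsTopologicalRing 𝕜] (V : Submodule 𝕜 C(X, 𝕜))
    (one_mem : (1 : C(X, 𝕜)) ∈ V) (sep : ∀ x y : X, x ≠ y → ∃ f ∈ V, f x ≠ f y) :
    (V : Set C(X, 𝕜)).SeparatesPointsStrongly := by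
  intro v x y
  by_cases hxy : x = y
  · subst hxy
    exact ⟨v x • 1, V.smul_mem _ one_mem, by simp, by simp⟩
  obtain ⟨f, hf, hfxy⟩ := sep x y hxy
  have hne : f x - f y ≠ 0 := sub_ne_zero.mpr hfxy
  set a := (v x - v y) / (f x - f y)
  refine ⟨a • f + (v x - a * f x) • 1,
    V.add_mem (V.smul_mem _ hf) (V.smul_mem _ one_mem), by simp, ?_⟩
  simp only [add_apply, smul_apply, one_apply, smul_eq_mul, mul_one, a]
  field_simp
  ring

end ContinuousMap

theorem smul_mem_closure_of_ratCast_smul_mem {E : Type*} [TopologicalSpace E] [SMul ℝ E]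
    [ContinuousSMul ℝ E] {S : Set E} (hS : ∀ q : ℚ, ∀ f ∈ S, (q : ℝ) • f ∈ S) (a : ℝ) {f : E}
    (hf : f ∈ closure S) : a • f ∈ closure S :=
  map_mem_closure₂ (s := range ((↑) : ℚ → ℝ)) (continuous_smul (M := ℝ) (X := E))
    ((Rat.denseRange_cast (𝕜 := ℝ)).closure_range ▸ mem_univ a) hf
    (by rintro _ ⟨q, rfl⟩ g hg; exact hS q g hg)

/-- Stone–Weierstrass via lattice conditions. Let `T` be a compact
Hausdorff space and `S ⊆ C⁰(T)` a subset that (1) separates points, (2) contains a nonzero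
real constant function, (3) is a `ℚ`-vector subspace of `C⁰(T)`, and (4) is closed under
pointwise maximum. Then `S` is dense in `C⁰(T)` for the supremum norm. -/
theorem stmt13 {T : Type*} [TopologicalSpace T] [CompactSpace T] [T2Space T]
    (S : Set C(T, ℝ))
    (hsep : ∀ x y : T, x ≠ y → ∃ f ∈ S, f x ≠ f y)
    (hconst : ∃ c : ℝ, c ≠ 0 ∧ ContinuousMap.const T c ∈ S)
    (hzero : (0 : C(T, ℝ)) ∈ S)
    (hadd : ∀ f ∈ S, ∀ g ∈ S, f + g ∈ S)
    (hsmul : ∀ (q : ℚ), ∀ f ∈ S, (q : ℝ) • f ∈ S)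
    (hmax : ∀ f ∈ S, ∀ g ∈ S, f ⊔ g ∈ S) :
    Dense S := by
  let L : Submodule ℝ C(T, ℝ) :=
    { carrier := closure S
      zero_mem' := subset_closure hzero
      add_mem' := fun hf hg => map_mem_closure₂ continuous_add hf hg hadd
      smul_mem' := fun a _ hf => smul_mem_closure_of_ratCast_smul_mem hsmul a hf }
  have sup_mem : ∀ f ∈ L, ∀ g ∈ L, f ⊔ g ∈ L :=
    fun _ hf _ hg => map_mem_closure₂ continuous_sup hf hg hmax
  have inf_mem : ∀ f ∈ L, ∀ g ∈ L, f ⊓ g ∈ L := fun f hf g hg => by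
    simpa [neg_sup] using L.neg_mem (sup_mem _ (L.neg_mem hf) _ (L.neg_mem hg))
  obtain ⟨c, hc, hcS⟩ := hconst
  have one_mem : (1 : C(T, ℝ)) ∈ L := by
    convert L.smul_mem c⁻¹ (subset_closure hcS)
    ext; simp [hc]
  have hL := ContinuousMap.sublattice_closure_eq_top (L : Set C(T, ℝ)) ⟨0, L.zero_mem⟩ inf_mem sup_mem
    (ContinuousMap.separatesPointsStrongly_of_one_mem L one_mem
      fun x y hxy => (hsep x y hxy).imp fun _ ⟨hf, hfxy⟩ => ⟨subset_closure hf, hfxy⟩)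
  rw [dense_iff_closure_eq, ← closure_closure, ← Set.top_eq_univ]
  exact hL
end

section
/- Let k be a field with a valuation v and k_v its completion. Let A be a k-algebra and A_v := A ⊗_k k_v. If x and x′ are two multiplicative seminorms on A_v extending v on k_v, and |a ⊗ 1|_x = |a ⊗ 1|_{x′} for all a ∈ A, then x = x′, i.e. |α|_x = |α|_{x′} for all α ∈ A_v. -/
open TensorProduct

lemma stmt15_aux {k K : Type*} [Field k] [NormedField K] [Algebra k K]
    (hdense : DenseRange (algebraMap k K))
    {A : Type*} [CommRing A] [Algebra k A]
    (x x' : A ⊗[k] K → ℝ)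
    (hx_nonneg : ∀ α, 0 ≤ x α) (hx'_nonneg : ∀ α, 0 ≤ x' α)
    (hx_add : ∀ α β, x (α + β) ≤ x α + x β)
    (hx'_add : ∀ α β, x' (α + β) ≤ x' α + x' β)
    (hx_mul : ∀ α β, x (α * β) = x α * x β)
    (hx'_mul : ∀ α β, x' (α * β) = x' α * x' β)
    (hx_ext : ∀ c : K, x ((1 : A) ⊗ₜ[k] c) = ‖c‖)
    (hx'_ext : ∀ c : K, x' ((1 : A) ⊗ₜ[k] c) = ‖c‖)
    (h : ∀ a : A, x (a ⊗ₜ[k] (1 : K)) = x' (a ⊗ₜ[k] (1 : K))) :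
    ∀ α : A ⊗[k] K, x α ≤ x' α := by
  -- basic facts
  have hx0 : x 0 = 0 := by
    have := hx_ext 0; simpa using this
  have hx'0 : x' 0 = 0 := by
    have := hx'_ext 0; simpa using this
  have hxneg : ∀ γ, x (-γ) = x γ := by
    intro γ
    have h1 : ((1 : A) ⊗ₜ[k] (-1 : K)) * γ = -γ := by
      have : ((1 : A) ⊗ₜ[k] (-1 : K)) = (-1 : A ⊗[k] K) := by
        rw [TensorProduct.tmul_neg, ← Algebra.TensorProduct.one_def]
      rw [this]; ring
    calc x (-γ) = x (((1 : A) ⊗ₜ[k] (-1 : K)) * γ) := by rw [h1]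
    _ = x ((1 : A) ⊗ₜ[k] (-1 : K)) * x γ := hx_mul _ _
    _ = x γ := by rw [hx_ext]; simp
  have hx'neg : ∀ γ, x' (-γ) = x' γ := by
    intro γ
    have h1 : ((1 : A) ⊗ₜ[k] (-1 : K)) * γ = -γ := by
      have : ((1 : A) ⊗ₜ[k] (-1 : K)) = (-1 : A ⊗[k] K) := by
        rw [TensorProduct.tmul_neg, ← Algebra.TensorProduct.one_def]
      rw [this]; ring
    calc x' (-γ) = x' (((1 : A) ⊗ₜ[k] (-1 : K)) * γ) := by rw [h1]
    _ = x' ((1 : A) ⊗ₜ[k] (-1 : K)) * x' γ := hx'_mul _ _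
    _ = x' γ := by rw [hx'_ext]; simp
  have hxtm : ∀ (a : A) (c : K), x (a ⊗ₜ[k] c) = x (a ⊗ₜ[k] (1 : K)) * ‖c‖ := by
    intro a c
    have : (a ⊗ₜ[k] (1 : K)) * ((1 : A) ⊗ₜ[k] c) = a ⊗ₜ[k] c := by
      rw [Algebra.TensorProduct.tmul_mul_tmul]; simp
    rw [← this, hx_mul, hx_ext]
  have hx'tm : ∀ (a : A) (c : K), x' (a ⊗ₜ[k] c) = x' (a ⊗ₜ[k] (1 : K)) * ‖c‖ := by
    intro a c
    have : (a ⊗ₜ[k] (1 : K)) * ((1 : A) ⊗ₜ[k] c) = a ⊗ₜ[k] c := by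
      rw [Algebra.TensorProduct.tmul_mul_tmul]; simp
    rw [← this, hx'_mul, hx'_ext]
  -- approximation lemma
  have happrox : ∀ α : A ⊗[k] K, ∀ ε : ℝ, 0 < ε →
      ∃ a : A, x (α - a ⊗ₜ[k] (1 : K)) < ε ∧ x' (α - a ⊗ₜ[k] (1 : K)) < ε := by
    intro α
    induction α using TensorProduct.induction_on with
    | zero =>
      intro ε hε
      refine ⟨0, ?_, ?_⟩ <;> simp [hx0, hx'0, hε]
    | tmul a c =>
      intro ε hε
      set M : ℝ := max (x (a ⊗ₜ[k] (1 : K))) (x' (a ⊗ₜ[k] (1 : K))) + 1 with hM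
      have hM0 : 0 < M := by
        have := hx_nonneg (a ⊗ₜ[k] (1 : K))
        have hle := le_max_left (x (a ⊗ₜ[k] (1 : K))) (x' (a ⊗ₜ[k] (1 : K)))
        linarith
      obtain ⟨lam, hlam⟩ := hdense.exists_dist_lt c (div_pos hε hM0)
      refine ⟨lam • a, ?_, ?_⟩
      · have heq : (lam • a) ⊗ₜ[k] (1 : K) = a ⊗ₜ[k] (algebraMap k K lam) := by
          rw [TensorProduct.smul_tmul, Algebra.algebraMap_eq_smul_one]
        have hdiff : a ⊗ₜ[k] c - (lam • a) ⊗ₜ[k] (1 : K)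
            = a ⊗ₜ[k] (c - algebraMap k K lam) := by
          rw [heq, TensorProduct.tmul_sub]
        rw [hdiff, hxtm]
        have hd : ‖c - algebraMap k K lam‖ < ε / M := by
          rwa [dist_eq_norm] at hlam
        have hd0 : 0 ≤ ‖c - algebraMap k K lam‖ := norm_nonneg _
        have hxle : x (a ⊗ₜ[k] (1 : K)) ≤ M := by
          have := le_max_left (x (a ⊗ₜ[k] (1 : K))) (x' (a ⊗ₜ[k] (1 : K)))
          linarith
        calc x (a ⊗ₜ[k] (1 : K)) * ‖c - algebraMap k K lam‖
            ≤ M * ‖c - algebraMap k K lam‖ := mul_le_mul_of_nonneg_right hxle hd0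
          _ < M * (ε / M) := by exact mul_lt_mul_of_pos_left hd hM0
          _ = ε := by field_simp
      · have heq : (lam • a) ⊗ₜ[k] (1 : K) = a ⊗ₜ[k] (algebraMap k K lam) := by
          rw [TensorProduct.smul_tmul, Algebra.algebraMap_eq_smul_one]
        have hdiff : a ⊗ₜ[k] c - (lam • a) ⊗ₜ[k] (1 : K)
            = a ⊗ₜ[k] (c - algebraMap k K lam) := by
          rw [heq, TensorProduct.tmul_sub]
        rw [hdiff, hx'tm]
        have hd : ‖c - algebraMap k K lam‖ < ε / M := by
          rwa [dist_eq_norm] at hlam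
        have hd0 : 0 ≤ ‖c - algebraMap k K lam‖ := norm_nonneg _
        have hxle : x' (a ⊗ₜ[k] (1 : K)) ≤ M := by
          have := le_max_right (x (a ⊗ₜ[k] (1 : K))) (x' (a ⊗ₜ[k] (1 : K)))
          linarith
        calc x' (a ⊗ₜ[k] (1 : K)) * ‖c - algebraMap k K lam‖
            ≤ M * ‖c - algebraMap k K lam‖ := mul_le_mul_of_nonneg_right hxle hd0
          _ < M * (ε / M) := by exact mul_lt_mul_of_pos_left hd hM0
          _ = ε := by field_simp
    | add α β ihα ihβ =>
      intro ε hε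
      obtain ⟨a, ha1, ha2⟩ := ihα (ε / 2) (by linarith)
      obtain ⟨b, hb1, hb2⟩ := ihβ (ε / 2) (by linarith)
      refine ⟨a + b, ?_, ?_⟩
      · have heq : α + β - (a + b) ⊗ₜ[k] (1 : K)
            = (α - a ⊗ₜ[k] (1 : K)) + (β - b ⊗ₜ[k] (1 : K)) := by
          rw [TensorProduct.add_tmul]; ring
        rw [heq]
        calc x _ ≤ x (α - a ⊗ₜ[k] (1 : K)) + x (β - b ⊗ₜ[k] (1 : K)) := hx_add _ _
          _ < ε / 2 + ε / 2 := add_lt_add ha1 hb1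
          _ = ε := by ring
      · have heq : α + β - (a + b) ⊗ₜ[k] (1 : K)
            = (α - a ⊗ₜ[k] (1 : K)) + (β - b ⊗ₜ[k] (1 : K)) := by
          rw [TensorProduct.add_tmul]; ring
        rw [heq]
        calc x' _ ≤ x' (α - a ⊗ₜ[k] (1 : K)) + x' (β - b ⊗ₜ[k] (1 : K)) := hx'_add _ _
          _ < ε / 2 + ε / 2 := add_lt_add ha2 hb2
          _ = ε := by ring
  -- main argument
  intro α
  refine le_of_forall_pos_le_add ?_
  intro ε hε
  obtain ⟨a, ha1, ha2⟩ := happrox α (ε / 2) (by linarith)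
  have h1 : x α ≤ x (α - a ⊗ₜ[k] (1 : K)) + x (a ⊗ₜ[k] (1 : K)) := by
    have := hx_add (α - a ⊗ₜ[k] (1 : K)) (a ⊗ₜ[k] (1 : K))
    simpa using this
  have h2 : x' (a ⊗ₜ[k] (1 : K)) ≤ x' (α - a ⊗ₜ[k] (1 : K)) + x' α := by
    have := hx'_add (-(α - a ⊗ₜ[k] (1 : K))) α
    rw [hx'neg] at this
    have heq : -(α - a ⊗ₜ[k] (1 : K)) + α = a ⊗ₜ[k] (1 : K) := by ring
    rwa [heq] at this
  have h3 := h a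
  linarith

/-- Let `k` be a field with a valuation (absolute value) and `K = k_v` its
completion; here `K` is a normed field and `k` a dense subfield (`algebraMap k K` has dense
range and is isometric onto its image).  Let `A` be a `k`-algebra and `A_v = A ⊗_k K`.  If
`x`, `x′` are multiplicative seminorms on `A_v` extending the absolute value of `K`, and
`|a ⊗ 1|_x = |a ⊗ 1|_{x′}` for all `a ∈ A`, then `x = x′`. -/
theorem stmt15 {k K : Type*} [Field k] [NormedField K] [Algebra k K]
    (hdense : DenseRange (algebraMap k K))
    {A : Type*} [CommRing A] [Algebra k A]
    (x x' : A ⊗[k] K → ℝ)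
    (hx_nonneg : ∀ α, 0 ≤ x α) (hx'_nonneg : ∀ α, 0 ≤ x' α)
    (hx_add : ∀ α β, x (α + β) ≤ x α + x β)
    (hx'_add : ∀ α β, x' (α + β) ≤ x' α + x' β)
    (hx_mul : ∀ α β, x (α * β) = x α * x β)
    (hx'_mul : ∀ α β, x' (α * β) = x' α * x' β)
    (hx_ext : ∀ c : K, x ((1 : A) ⊗ₜ[k] c) = ‖c‖)
    (hx'_ext : ∀ c : K, x' ((1 : A) ⊗ₜ[k] c) = ‖c‖)
    (h : ∀ a : A, x (a ⊗ₜ[k] (1 : K)) = x' (a ⊗ₜ[k] (1 : K))) :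
    ∀ α : A ⊗[k] K, x α = x' α := by
  intro α
  exact le_antisymm
    (stmt15_aux hdense x x' hx_nonneg hx'_nonneg hx_add hx'_add hx_mul hx'_mul
      hx_ext hx'_ext h α)
    (stmt15_aux hdense x' x hx'_nonneg hx_nonneg hx'_add hx_add hx'_mul hx_mul
      hx'_ext hx_ext (fun a => (h a).symm) α)
end

section
/- Let f : ℚ^r → ℝ ∪ {∞} be a convex function over ℚ (f(t·x + (1−t)·y) ≤ t·f(x) + (1−t)·f(y) for all x,y ∈ ℚ^r and t ∈ [0,1] ∩ ℚ) which is real-valued on an open box (−c, ∞)^r ∩ ℚ^r for some c > 0. Then there exists a continuous function f̃ : (−c, ∞)^r → ℝ with f̃ = f on (−c, ∞)^r ∩ ℚ^r. In particular, lim_{x→0, x∈ℚ^r} f(x) = f(0). -/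
/-!
A `ℚ`-convex function is bounded above on a rational box by its values at the finitely many
corners, since the box is their `ℚ`-convex hull, and reflecting through a nearby rational point
turns this into a two-sided bound. A bound `|f| ≤ M` on the `ε`-thickening of a set makes `f`
`(2M/ε)`-Lipschitz on the set, by comparing `f x - f y` with the increment of `f` from `x` to
`x + t (x - y)` for a rational `t` just below `ε / dist x y`. Hence `f` is Lipschitz on the rational
points of a neighbourhood of every point of the open box, and since `ℚ^r` sits isometrically and
densely in `ℝ^r`, it extends continuously to the box.
-/

open Set Filter Metric Topology

section Corners

variable {ι 𝕜 β : Type*} [Finite ι] [Field 𝕜] [LinearOrder 𝕜] [IsStrictOrderedRing 𝕜]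

theorem convexHull_pi_pair {a b : ι → 𝕜} (hab : a ≤ b) :
    convexHull 𝕜 (univ.pi fun i ↦ ({a i, b i} : Set 𝕜)) = Icc a b := by
  rw [convexHull_pi, ← pi_univ_Icc]
  congr! with i
  rw [convexHull_pair, segment_eq_Icc (hab i)]

variable [AddCommGroup β] [LinearOrder β] [IsOrderedAddMonoid β] [Module 𝕜 β]
  [IsStrictOrderedModule 𝕜 β]

theorem ConvexOn.bddAbove_image_Icc {s : Set (ι → 𝕜)} {f : (ι → 𝕜) → β} (hf : ConvexOn 𝕜 s f)
    {a b : ι → 𝕜} (hab : a ≤ b) (hs : Icc a b ⊆ s) : BddAbove (f '' Icc a b) := by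
  set corners := univ.pi fun i ↦ ({a i, b i} : Set 𝕜)
  have hcorners : corners ⊆ Icc a b := convexHull_pi_pair hab ▸ subset_convexHull 𝕜 corners
  obtain ⟨M, hM⟩ := ((Set.Finite.pi fun i ↦ toFinite ({a i, b i} : Set 𝕜)).image f).bddAbove
  refine ⟨M, forall_mem_image.2 fun x hx ↦ ?_⟩
  rw [← convexHull_pi_pair hab] at hx
  obtain ⟨y, hy, hxy⟩ := hf.exists_ge_of_mem_convexHull (hcorners.trans hs) hx
  exact hxy.trans (hM (mem_image_of_mem f hy))

end Corners

section LipschitzOverRat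

theorem ConvexOn.mul_sub_le_extrapolate_sub {E : Type*} [AddCommGroup E] [Module ℚ E] {s : Set E}
    {f : E → ℝ} (hf : ConvexOn ℚ s f) {x y : E} (hy : y ∈ s) {t : ℚ} (ht : 0 ≤ t)
    (hz : x + t • (x - y) ∈ s) : t * (f x - f y) ≤ f (x + t • (x - y)) - f x := by
  have hx_eq : (1 / (1 + t)) • (x + t • (x - y)) + (t / (1 + t)) • y = x := by
    match_scalars <;> simp [field]
  have h := hf.2 hz hy (show 0 ≤ 1 / (1 + t) by positivity) (show 0 ≤ t / (1 + t) by positivity)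
    (by field_simp)
  rw [hx_eq, Rat.smul_def, Rat.smul_def] at h
  push_cast at h
  field_simp at h
  linarith

variable {E : Type*} [NormedAddCommGroup E] [NormedSpace ℚ E] {s D : Set E} {f : E → ℝ} {ε M : ℝ}

theorem ConvexOn.lipschitzOnWith_of_abs_le_on_thickening (hf : ConvexOn ℚ s f) (hε : 0 < ε)
    (hDs : thickening ε D ⊆ s) (hM : ∀ a ∈ thickening ε D, |f a| ≤ M) :
    LipschitzOnWith (2 * M / ε).toNNReal f D := by
  have oneside {x y : E} (hx : x ∈ D) (hy : y ∈ D) : f x - f y ≤ 2 * M / ε * dist x y := by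
    by_contra! hlt
    have hM0 : 0 ≤ M := (abs_nonneg _).trans (hM x (self_subset_thickening hε D hx))
    have hxy : 0 < dist x y := dist_pos.2 fun h ↦ by subst h; simp at hlt
    have hfxy : 0 < f x - f y := lt_of_le_of_lt (by positivity) hlt
    obtain ⟨t, ht₁, ht₂⟩ : ∃ t : ℚ, 2 * M / (f x - f y) < t ∧ (t : ℝ) < ε / dist x y := by
      refine exists_rat_btwn ?_
      rw [div_lt_div_iff₀ hfxy hxy]
      rw [div_mul_eq_mul_div, div_lt_iff₀ hε] at hlt
      linarith
    have ht : (0 : ℝ) < t := (div_nonneg (by positivity) hfxy.le).trans_lt ht₁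
    have hz : x + t • (x - y) ∈ thickening ε D := mem_thickening_iff.2 ⟨x, hx, by
      rw [dist_eq_norm, add_sub_cancel_left, norm_smul, ← dist_eq_norm, ← Rat.norm_cast_real,
        Real.norm_of_nonneg ht.le]
      exact (lt_div_iff₀ hxy).1 ht₂⟩
    have hslope := hf.mul_sub_le_extrapolate_sub (hDs (self_subset_thickening hε D hy))
      (by exact_mod_cast ht.le) (hDs hz)
    rw [div_lt_iff₀ hfxy] at ht₁
    linarith [(abs_le.1 (hM _ hz)).2, (abs_le.1 (hM x (self_subset_thickening hε D hx))).1]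
  refine .of_dist_le' fun x hx y hy ↦ ?_
  rw [Real.dist_eq, abs_sub_le_iff]
  exact ⟨oneside hx hy, dist_comm x y ▸ oneside hy hx⟩

end LipschitzOverRat

section Extension

variable {α β γ : Type*} [UniformSpace α] [UniformSpace β] [UniformSpace γ] [CompleteSpace γ]
  {e : α → β} {F : α → γ}

theorem IsUniformInducing.exists_tendsto_comap_nhds (he : IsUniformInducing e) (hd : DenseRange e)
    {V : Set β} (hF : UniformContinuousOn F (e ⁻¹' V)) {b : β} (hb : V ∈ 𝓝 b) :
    ∃ c, Tendsto F (comap e (𝓝 b)) (𝓝 c) := by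
  have := (he.isDenseInducing hd).comap_nhds_neBot b
  have hcauchy : Cauchy (comap e (𝓝 b)) := (cauchy_nhds).comap he.comap_uniformity.le
  exact CompleteSpace.complete (hcauchy.map_of_le hF (le_principal_iff.2 (preimage_mem_comap hb)))

theorem IsUniformInducing.exists_continuousOn_extension [T0Space γ] (he : IsUniformInducing e)
    (hd : DenseRange e) {U : Set β} (hF : ∀ b ∈ U, ∃ V ∈ 𝓝 b, UniformContinuousOn F (e ⁻¹' V)) :
    ∃ g : β → γ, ContinuousOn g U ∧ ∀ a, e a ∈ U → g (e a) = F a := by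
  set di := he.isDenseInducing hd
  refine ⟨di.extend F, fun b hb ↦ ?_, fun a ha ↦ ?_⟩
  · obtain ⟨V, hV, hFV⟩ := hF b hb
    refine (di.continuousAt_extend ?_).continuousWithinAt
    filter_upwards [eventually_mem_nhds_iff.2 hV] with x hx
    exact he.exists_tendsto_comap_nhds hd hFV hx
  · obtain ⟨V, hV, hFV⟩ := hF _ ha
    exact di.extend_eq_at
      (hFV.continuousOn.continuousAt (he.uniformContinuous.continuous.continuousAt hV))

end Extension

namespace Rat

variable {ι : Type*}

def castPi (x : ι → ℚ) : ι → ℝ := fun i ↦ x i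

@[simp] lemma castPi_apply (x : ι → ℚ) (i : ι) : castPi x i = x i := rfl

lemma isometry_castPi [Fintype ι] : Isometry (castPi : (ι → ℚ) → ι → ℝ) :=
  .piMap (fun _ ↦ ((↑) : ℚ → ℝ)) fun _ ↦ .of_dist_eq Rat.dist_cast

lemma denseRange_castPi : DenseRange (castPi : (ι → ℚ) → ι → ℝ) :=
  .piMap fun _ ↦ Rat.denseRange_cast

lemma isLinearMap_castPi : IsLinearMap ℚ (castPi : (ι → ℚ) → ι → ℝ) :=
  ⟨fun x y ↦ by ext; simp, fun q x ↦ by ext; simp [Rat.smul_def]⟩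

lemma preimage_castPi_Icc (a b : ι → ℚ) : castPi ⁻¹' Icc (castPi a) (castPi b) = Icc a b := by
  ext x
  simp [Pi.le_def]

lemma exists_Icc_castPi_mem_nhds_subset [Fintype ι] {z : ι → ℝ} {V : Set (ι → ℝ)}
    (hV : V ∈ 𝓝 z) :
    ∃ a b : ι → ℚ, a ≤ b ∧ Icc (castPi a) (castPi b) ∈ 𝓝 z ∧ Icc (castPi a) (castPi b) ⊆ V := by
  obtain ⟨ε, hε, hball⟩ := Metric.mem_nhds_iff.1 hV
  choose a ha using fun i ↦ exists_rat_btwn (sub_lt_self (z i) hε)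
  choose b hb using fun i ↦ exists_rat_btwn (lt_add_of_pos_right (z i) hε)
  refine ⟨a, b, fun i ↦ by exact_mod_cast (ha i).2.le.trans (hb i).1.le, ?_, fun w hw ↦ hball ?_⟩
  · rw [← pi_univ_Icc]
    exact set_pi_mem_nhds finite_univ fun i _ ↦ Icc_mem_nhds (ha i).2 (hb i).1
  · rw [mem_ball, dist_pi_lt_iff hε]
    intro i
    have hlo : (a i : ℝ) ≤ w i := hw.1 i
    have hhi : w i ≤ b i := hw.2 i
    rw [Real.dist_eq, abs_lt]
    constructor <;> linarith [(ha i).1, (hb i).2]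

end Rat

open Rat

section CastPi

variable {ι : Type*} [Fintype ι] {U : Set (ι → ℝ)} {F : (ι → ℚ) → ℝ} {z : ι → ℝ}

theorem ConvexOn.exists_mem_nhds_abs_le_castPi (hU : IsOpen U) (hF : ConvexOn ℚ (castPi ⁻¹' U) F)
    (hz : z ∈ U) : ∃ V ∈ 𝓝 z, ∃ M, ∀ q, castPi q ∈ V → |F q| ≤ M := by
  obtain ⟨a, b, hab, hW, hWU⟩ := exists_Icc_castPi_mem_nhds_subset (hU.mem_nhds hz)
  set W := Icc (castPi a) (castPi b)
  obtain ⟨M, hM⟩ := hF.bddAbove_image_Icc hab (preimage_castPi_Icc a b ▸ preimage_mono hWU)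
  have hFW : ∀ q, castPi q ∈ W → F q ≤ M := fun q hq ↦
    hM (mem_image_of_mem F (preimage_castPi_Icc a b ▸ hq))
  have hrefl : Tendsto (fun p : (ι → ℝ) × (ι → ℝ) ↦ p.1 + (p.1 - p.2)) (𝓝 z ×ˢ 𝓝 z) (𝓝 z) := by
    rw [← nhds_prod_eq]
    exact Continuous.tendsto' (by fun_prop) (z, z) z (by simp)
  obtain ⟨N, hN, hNW⟩ := eventually_prod_self_iff'.1 (hrefl.eventually_mem hW)
  obtain ⟨_, ⟨x₀, rfl⟩, hx₀⟩ := denseRange_castPi.inter_nhds_nonempty hN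
  refine ⟨N, hN, |M| + 2 * |F x₀|, fun q hq ↦ abs_le.2 ⟨?_, ?_⟩⟩
  · have hqW : castPi q ∈ W := by simpa using hNW _ hq _ hq
    have hq' : castPi (x₀ + (x₀ - q)) ∈ W := by
      simpa [isLinearMap_castPi.map_add, isLinearMap_castPi.map_sub] using hNW _ hx₀ _ hq
    have hmid := hF.2 (hWU hqW) (hWU hq') (show (0 : ℚ) ≤ 1 / 2 by norm_num)
      (show (0 : ℚ) ≤ 1 / 2 by norm_num) (by norm_num)
    rw [show (1 / 2 : ℚ) • q + (1 / 2 : ℚ) • (x₀ + (x₀ - q)) = x₀ by module, Rat.smul_def,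
      Rat.smul_def] at hmid
    push_cast at hmid
    linarith [hFW _ hq', le_abs_self M, neg_abs_le (F x₀)]
  · exact (hFW q (by simpa using hNW _ hq _ hq)).trans
      ((le_abs_self M).trans (le_add_of_nonneg_right (by positivity)))

theorem ConvexOn.exists_lipschitzOnWith_castPi (hU : IsOpen U) (hF : ConvexOn ℚ (castPi ⁻¹' U) F)
    (hz : z ∈ U) : ∃ K, ∃ V ∈ 𝓝 z, LipschitzOnWith K F (castPi ⁻¹' V) := by
  obtain ⟨W, hW, M, hM⟩ := hF.exists_mem_nhds_abs_le_castPi hU hz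
  obtain ⟨ε, hε, hεW⟩ := Metric.mem_nhds_iff.1 (inter_mem hW (hU.mem_nhds hz))
  have hthick : thickening (ε / 2) (castPi ⁻¹' ball z (ε / 2)) ⊆ castPi ⁻¹' (W ∩ U) := by
    intro a ha
    obtain ⟨d, hd, had⟩ := mem_thickening_iff.1 ha
    apply hεW
    calc dist (castPi a) z ≤ dist (castPi a) (castPi d) + dist (castPi d) z := dist_triangle ..
      _ < ε / 2 + ε / 2 := by rw [isometry_castPi.dist_eq]; exact add_lt_add had hd
      _ = ε := add_halves ε
  exact ⟨_, ball z (ε / 2), ball_mem_nhds z (half_pos hε),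
    hF.lipschitzOnWith_of_abs_le_on_thickening (half_pos hε) (hthick.trans fun _ ha ↦ ha.2)
      fun a ha ↦ hM a (hthick ha).1⟩

end CastPi

theorem convexOn_untop₀ {E : Type*} [AddCommGroup E] [Module ℚ E] {f : E → WithTop ℝ} {s : Set E}
    (hs : Convex ℚ s)
    (hconv : ∀ x y : E, ∀ t : ℚ, 0 ≤ t → t ≤ 1 →
      f (t • x + (1 - t) • y) ≤ ((t : ℝ) : WithTop ℝ) * f x
        + (((1 - t : ℚ) : ℝ) : WithTop ℝ) * f y)
    (hfin : ∀ x ∈ s, f x ≠ ⊤) : ConvexOn ℚ s fun x ↦ (f x).untop₀ := by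
  refine ⟨hs, fun x hx y hy a b ha hb hab ↦ ?_⟩
  obtain rfl : b = 1 - a := by linarith
  have h := hconv x y a ha (by linarith)
  rw [← WithTop.coe_untop₀_of_ne_top (hfin x hx), ← WithTop.coe_untop₀_of_ne_top (hfin y hy),
    ← WithTop.coe_untop₀_of_ne_top (hfin _ (hs hx hy ha hb (by ring)))] at h
  simp only [Rat.smul_def]
  exact_mod_cast h

/-- Let `f : ℚ^r → ℝ ∪ {∞}` be convex over `ℚ`
(`f(t·x + (1−t)·y) ≤ t·f(x) + (1−t)·f(y)` for `x, y ∈ ℚ^r`, `t ∈ [0,1] ∩ ℚ`), real-valued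
on `(−c, ∞)^r ∩ ℚ^r` for some `c > 0`.  Then there is a continuous `f̃ : (−c, ∞)^r → ℝ`
with `f̃ = f` on `(−c, ∞)^r ∩ ℚ^r`; in particular `lim_{x→0, x∈ℚ^r} f(x) = f(0)`. -/
theorem stmt18 {r : ℕ} (f : (Fin r → ℚ) → WithTop ℝ) (c : ℝ) (hc : 0 < c)
    (hconv : ∀ x y : Fin r → ℚ, ∀ t : ℚ, 0 ≤ t → t ≤ 1 →
      f (t • x + (1 - t) • y) ≤ ((t : ℝ) : WithTop ℝ) * f x
        + (((1 - t : ℚ) : ℝ) : WithTop ℝ) * f y)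
    (hreal : ∀ x : Fin r → ℚ, (∀ i, -c < (x i : ℝ)) → f x ≠ ⊤) :
    ∃ g : (Fin r → ℝ) → ℝ,
      ContinuousOn g {z : Fin r → ℝ | ∀ i, -c < z i} ∧
      (∀ x : Fin r → ℚ, (∀ i, -c < (x i : ℝ)) →
        f x = ((g fun i => (x i : ℝ)) : WithTop ℝ)) ∧
      (∀ ε : ℝ, 0 < ε → ∃ δ : ℝ, 0 < δ ∧ ∀ x : Fin r → ℚ,
        (∀ i, |(x i : ℝ)| < δ) →
          ∃ yval : ℝ, f x = (yval : WithTop ℝ) ∧ |yval - g 0| < ε) ∧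
      f 0 = ((g 0 : ℝ) : WithTop ℝ) := by
  set U : Set (Fin r → ℝ) := {z | ∀ i, -c < z i}
  have hU : IsOpen U := by
    simpa only [U, ofPred_forall] using
      isOpen_iInter_of_finite fun i : Fin r ↦ isOpen_lt continuous_const (continuous_apply i)
  have hUconv : Convex ℝ U := fun x hx y hy a b ha hb hab i ↦
    convex_Ioi (-c) (hx i) (hy i) ha hb hab
  have hF : ConvexOn ℚ (castPi ⁻¹' U) fun x ↦ (f x).untop₀ :=
    convexOn_untop₀ ((hUconv.lift ℚ).is_linear_preimage isLinearMap_castPi) hconv hreal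
  obtain ⟨g, hg, hgF⟩ := isometry_castPi.isUniformInducing.exists_continuousOn_extension
    denseRange_castPi fun z hz ↦
      let ⟨_, V, hV, hK⟩ := hF.exists_lipschitzOnWith_castPi hU hz
      ⟨V, hV, hK.uniformContinuousOn⟩
  have hfg (x : Fin r → ℚ) (hx : castPi x ∈ U) : f x = g (castPi x) := by
    rw [hgF x hx, WithTop.coe_untop₀_of_ne_top (hreal x hx)]
  have h0 : castPi (0 : Fin r → ℚ) = 0 := isLinearMap_castPi.map_zero
  have hU0 : (0 : Fin r → ℝ) ∈ U := fun _ ↦ neg_lt_zero.2 hc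
  refine ⟨g, hg, hfg, fun ε hε ↦ ?_, by rw [hfg 0 (h0 ▸ hU0), h0]⟩
  obtain ⟨δ, hδ, hδg⟩ := Metric.continuousAt_iff.1 (hg.continuousAt (hU.mem_nhds hU0)) ε hε
  refine ⟨min δ c, lt_min hδ hc, fun x hx ↦ ⟨g (castPi x), hfg x ?_, ?_⟩⟩
  · exact fun i ↦ (abs_lt.1 ((hx i).trans_le (min_le_right _ _))).1
  · rw [← Real.dist_eq]
    refine hδg ((dist_pi_lt_iff hδ).2 fun i ↦ ?_)
    rw [Pi.zero_apply, Real.dist_eq, sub_zero, castPi_apply]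
    exact (hx i).trans_le (min_le_left _ _)
end
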